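/- arXiv:1508.03955 — 11 statements merged into one kernel-verified Lean document; each statement's English description precedes it below -/
import Mathlib

section
/- Let B be a Boolean algebra of subsets of a set X, and let μ be a finitely additive probability measure on B. Let D ⊆ X be any subset and r ∈ [0,1] be a real number such that μ(A) ≤ r for every A ∈ B with A ⊆ D, and μ(A) ≥ r for every A ∈ B with D ⊆ A. Then μ extends to a finitely additive probability measure μ' on the Boolean algebra generated by B ∪ {D} with μ'(D) = r. -/
open Set

def IsSetAlg {X : Type*} (B : Set (Set X)) : Prop :=
  ∅ ∈ B ∧ (∀ A ∈ B, Aᶜ ∈ B) ∧ ∀ A ∈ B, ∀ C ∈ B, A ∪ C ∈ B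

def genAlg {X : Type*} (S : Set (Set X)) : Set (Set X) :=
  ⋂₀ {B | IsSetAlg B ∧ S ⊆ B}

def IsFinAddProb {X : Type*} (B : Set (Set X)) (m : Set X → ℝ) : Prop :=
  m Set.univ = 1 ∧ (∀ A ∈ B, 0 ≤ m A) ∧
    ∀ A ∈ B, ∀ C ∈ B, Disjoint A C → m (A ∪ C) = m A + m C

section Aux
variable {X : Type*} {B : Set (Set X)} {μ : Set X → ℝ}

lemma alg_univ (hB : IsSetAlg B) : (univ : Set X) ∈ B := by
  have := hB.2.1 ∅ hB.1; simpa using this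

lemma alg_inter (hB : IsSetAlg B) {A C : Set X} (hA : A ∈ B) (hC : C ∈ B) :
    A ∩ C ∈ B := by
  have := hB.2.1 _ (hB.2.2 _ (hB.2.1 A hA) _ (hB.2.1 C hC))
  simpa [Set.compl_union] using this

lemma alg_diff (hB : IsSetAlg B) {A C : Set X} (hA : A ∈ B) (hC : C ∈ B) :
    A \ C ∈ B := by
  have := alg_inter hB hA (hB.2.1 C hC); simpa [Set.diff_eq] using this

lemma mu_empty (hB : IsSetAlg B) (hμ : IsFinAddProb B μ) : μ ∅ = 0 := by
  have := hμ.2.2 ∅ hB.1 ∅ hB.1 (by simp)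
  simp at this; linarith

lemma mu_diff_add (hB : IsSetAlg B) (hμ : IsFinAddProb B μ) {A C : Set X}
    (hA : A ∈ B) (hC : C ∈ B) : μ (C \ A) + μ (C ∩ A) = μ C := by
  have h1 : (C ∩ A) ∪ (C \ A) = C := Set.inter_union_diff C A
  have h2 := hμ.2.2 _ (alg_inter hB hC hA) _ (alg_diff hB hC hA)
    (Set.disjoint_sdiff_right.mono_left Set.inter_subset_right)
  rw [h1] at h2; linarith

lemma mu_mono (hB : IsSetAlg B) (hμ : IsFinAddProb B μ) {A C : Set X}
    (hA : A ∈ B) (hC : C ∈ B) (hAC : A ⊆ C) : μ A ≤ μ C := by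
  have h := mu_diff_add hB hμ hA hC
  have h2 : C ∩ A = A := Set.inter_eq_self_of_subset_right hAC
  have h3 := hμ.2.1 _ (alg_diff hB hC hA)
  rw [h2] at h; linarith

lemma mu_compl (hB : IsSetAlg B) (hμ : IsFinAddProb B μ) {A : Set X}
    (hA : A ∈ B) : μ Aᶜ = 1 - μ A := by
  have h := hμ.2.2 A hA Aᶜ (hB.2.1 A hA) disjoint_compl_right
  rw [Set.union_compl_self, hμ.1] at h; linarith

/-- Inner measure of `A ∩ D` with respect to subsets of `D` lying in `B`. -/
noncomputable def innerF (μ : Set X → ℝ) (B : Set (Set X)) (D A : Set X) : ℝ :=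
  sSup ((fun C => μ (A ∩ C)) '' {C | C ∈ B ∧ C ⊆ D})

lemma innerF_zero_mem (hB : IsSetAlg B) (hμ : IsFinAddProb B μ) (D A : Set X) :
    (0 : ℝ) ∈ ((fun C => μ (A ∩ C)) '' {C | C ∈ B ∧ C ⊆ D}) :=
  ⟨∅, ⟨hB.1, empty_subset _⟩, by simp [mu_empty hB hμ]⟩

lemma innerF_bdd (hB : IsSetAlg B) (hμ : IsFinAddProb B μ) {A : Set X} (hA : A ∈ B)
    (D : Set X) : ∀ x ∈ ((fun C => μ (A ∩ C)) '' {C | C ∈ B ∧ C ⊆ D}), x ≤ μ A := by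
  rintro x ⟨C, ⟨hC, -⟩, rfl⟩
  exact mu_mono hB hμ (alg_inter hB hA hC) hA Set.inter_subset_left

lemma innerF_le (hB : IsSetAlg B) (hμ : IsFinAddProb B μ) {A : Set X} (hA : A ∈ B)
    (D : Set X) : innerF μ B D A ≤ μ A :=
  csSup_le ⟨0, innerF_zero_mem hB hμ D A⟩ (innerF_bdd hB hμ hA D)

lemma innerF_nonneg (hB : IsSetAlg B) (hμ : IsFinAddProb B μ) {A : Set X} (hA : A ∈ B)
    (D : Set X) : 0 ≤ innerF μ B D A :=
  le_csSup ⟨μ A, innerF_bdd hB hμ hA D⟩ (innerF_zero_mem hB hμ D A)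

lemma innerF_trace {A A' : Set X} (D : Set X) (h : A ∩ D = A' ∩ D) :
    innerF μ B D A = innerF μ B D A' := by
  unfold innerF
  congr 1
  ext x
  constructor <;> rintro ⟨C, ⟨hC, hCD⟩, rfl⟩ <;> refine ⟨C, ⟨hC, hCD⟩, ?_⟩ <;>
    · show μ (_ ∩ C) = μ (_ ∩ C)
      congr 1
      ext y
      have hy := Set.ext_iff.mp h y
      have := @hCD y
      simp only [mem_inter_iff] at *
      tauto

lemma innerF_of_subset (hB : IsSetAlg B) (hμ : IsFinAddProb B μ) {A D : Set X}
    (hA : A ∈ B) (hAD : A ⊆ D) : innerF μ B D A = μ A := by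
  refine le_antisymm (innerF_le hB hμ hA D) ?_
  exact le_csSup ⟨μ A, innerF_bdd hB hμ hA D⟩ ⟨A, ⟨hA, hAD⟩, by simp⟩

lemma innerF_add (hB : IsSetAlg B) (hμ : IsFinAddProb B μ) {A A' : Set X} (D : Set X)
    (hA : A ∈ B) (hA' : A' ∈ B) (hd : Disjoint A A') :
    innerF μ B D (A ∪ A') = innerF μ B D A + innerF μ B D A' := by
  have hU : A ∪ A' ∈ B := hB.2.2 _ hA _ hA'
  refine le_antisymm ?_ ?_
  · refine csSup_le ⟨0, innerF_zero_mem hB hμ D _⟩ ?_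
    rintro x ⟨C, ⟨hC, hCD⟩, rfl⟩
    have hsplit : (A ∪ A') ∩ C = (A ∩ C) ∪ (A' ∩ C) := Set.union_inter_distrib_right A A' C
    have hdis : Disjoint (A ∩ C) (A' ∩ C) :=
      hd.mono Set.inter_subset_left Set.inter_subset_left
    have hadd := hμ.2.2 _ (alg_inter hB hA hC) _ (alg_inter hB hA' hC) hdis
    have h1 : μ (A ∩ C) ≤ innerF μ B D A :=
      le_csSup ⟨μ A, innerF_bdd hB hμ hA D⟩ ⟨C, ⟨hC, hCD⟩, rfl⟩
    have h2 : μ (A' ∩ C) ≤ innerF μ B D A' :=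
      le_csSup ⟨μ A', innerF_bdd hB hμ hA' D⟩ ⟨C, ⟨hC, hCD⟩, rfl⟩
    calc μ ((A ∪ A') ∩ C) = μ (A ∩ C) + μ (A' ∩ C) := by rw [hsplit, hadd]
      _ ≤ _ := add_le_add h1 h2
  · have key : ∀ C₁ ∈ B, C₁ ⊆ D → ∀ C₂ ∈ B, C₂ ⊆ D →
        μ (A ∩ C₁) + μ (A' ∩ C₂) ≤ innerF μ B D (A ∪ A') := by
      intro C₁ hC₁ hC₁D C₂ hC₂ hC₂D
      have hC : C₁ ∪ C₂ ∈ B := hB.2.2 _ hC₁ _ hC₂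
      have hCD : C₁ ∪ C₂ ⊆ D := Set.union_subset hC₁D hC₂D
      have m1 : μ (A ∩ C₁) ≤ μ (A ∩ (C₁ ∪ C₂)) :=
        mu_mono hB hμ (alg_inter hB hA hC₁) (alg_inter hB hA hC)
          (Set.inter_subset_inter_right _ Set.subset_union_left)
      have m2 : μ (A' ∩ C₂) ≤ μ (A' ∩ (C₁ ∪ C₂)) :=
        mu_mono hB hμ (alg_inter hB hA' hC₂) (alg_inter hB hA' hC)
          (Set.inter_subset_inter_right _ Set.subset_union_right)
      have hdis : Disjoint (A ∩ (C₁ ∪ C₂)) (A' ∩ (C₁ ∪ C₂)) :=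
        hd.mono Set.inter_subset_left Set.inter_subset_left
      have hadd := hμ.2.2 _ (alg_inter hB hA hC) _ (alg_inter hB hA' hC) hdis
      have hsplit : (A ∪ A') ∩ (C₁ ∪ C₂) = (A ∩ (C₁ ∪ C₂)) ∪ (A' ∩ (C₁ ∪ C₂)) :=
        Set.union_inter_distrib_right A A' _
      have hmem : μ ((A ∪ A') ∩ (C₁ ∪ C₂)) ≤ innerF μ B D (A ∪ A') :=
        le_csSup ⟨μ (A ∪ A'), innerF_bdd hB hμ hU D⟩ ⟨C₁ ∪ C₂, ⟨hC, hCD⟩, rfl⟩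
      rw [hsplit, hadd] at hmem
      linarith
    rw [← le_sub_iff_add_le]
    refine csSup_le ⟨0, innerF_zero_mem hB hμ D _⟩ ?_
    rintro x ⟨C₁, ⟨hC₁, hC₁D⟩, rfl⟩
    rw [le_sub_iff_add_le, add_comm, ← le_sub_iff_add_le]
    refine csSup_le ⟨0, innerF_zero_mem hB hμ D _⟩ ?_
    rintro y ⟨C₂, ⟨hC₂, hC₂D⟩, rfl⟩
    have := key C₁ hC₁ hC₁D C₂ hC₂ hC₂D
    linarith


/-- `gF μ B D A = μ A - innerF μ B D A`; depends only on `A ∩ Dᶜ`. -/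
noncomputable def gF (μ : Set X → ℝ) (B : Set (Set X)) (D A : Set X) : ℝ :=
  μ A - innerF μ B D A

lemma gF_nonneg (hB : IsSetAlg B) (hμ : IsFinAddProb B μ) {A : Set X} (hA : A ∈ B)
    (D : Set X) : 0 ≤ gF μ B D A :=
  sub_nonneg.mpr (innerF_le hB hμ hA D)

lemma gF_add (hB : IsSetAlg B) (hμ : IsFinAddProb B μ) {A A' : Set X} (D : Set X)
    (hA : A ∈ B) (hA' : A' ∈ B) (hd : Disjoint A A') :
    gF μ B D (A ∪ A') = gF μ B D A + gF μ B D A' := by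
  unfold gF
  rw [hμ.2.2 _ hA _ hA' hd, innerF_add hB hμ D hA hA' hd]
  ring

lemma gF_trace (hB : IsSetAlg B) (hμ : IsFinAddProb B μ) {A A' : Set X} {D : Set X}
    (hA : A ∈ B) (hA' : A' ∈ B) (h : A ∩ Dᶜ = A' ∩ Dᶜ) :
    gF μ B D A = gF μ B D A' := by
  have key : ∀ E ∈ B, ∀ E' ∈ B, E ∩ Dᶜ = E' ∩ Dᶜ →
      gF μ B D E = gF μ B D (E ∩ E') := by
    intro E hE E' hE' hEE'
    have hdiffD : E \ E' ⊆ D := by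
      intro x hx
      by_contra hxD
      have : x ∈ E ∩ Dᶜ := ⟨hx.1, hxD⟩
      rw [hEE'] at this
      exact hx.2 this.1
    have hmem1 : E ∩ E' ∈ B := alg_inter hB hE hE'
    have hmem2 : E \ E' ∈ B := alg_diff hB hE hE'
    have hsplit : (E ∩ E') ∪ (E \ E') = E := Set.inter_union_diff E E'
    have hdis : Disjoint (E ∩ E') (E \ E') :=
      Set.disjoint_sdiff_right.mono_left Set.inter_subset_right
    have h1 : gF μ B D E = gF μ B D (E ∩ E') + gF μ B D (E \ E') := by
      have := gF_add hB hμ D hmem1 hmem2 hdis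
      rw [hsplit] at this; exact this
    have h2 : gF μ B D (E \ E') = 0 := by
      unfold gF
      rw [innerF_of_subset hB hμ hmem2 hdiffD]
      ring
    rw [h1, h2, add_zero]
  have e1 := key A hA A' hA' h
  have e2 := key A' hA' A hA h.symm
  rw [Set.inter_comm A' A] at e2
  rw [e1, e2]

/-- Additivity of a function under a weaker disjointness (disjoint traces). -/
lemma quasiAdd (hB : IsSetAlg B) (h : Set X → ℝ) (T : Set X)
    (hadd : ∀ A ∈ B, ∀ A' ∈ B, Disjoint A A' → h (A ∪ A') = h A + h A')
    (htr : ∀ A ∈ B, ∀ A' ∈ B, A ∩ T = A' ∩ T → h A = h A')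
    {A A' : Set X} (hA : A ∈ B) (hA' : A' ∈ B) (hd : A ∩ A' ∩ T = ∅) :
    h (A ∪ A') = h A + h A' := by
  have h1 : A ∪ A' = (A \ A') ∪ A' := (Set.diff_union_self).symm
  have h2 : h (A \ A') = h A := by
    refine htr _ (alg_diff hB hA hA') _ hA ?_
    ext x
    simp only [mem_inter_iff, mem_diff]
    constructor
    · rintro ⟨⟨hx1, -⟩, hx2⟩; exact ⟨hx1, hx2⟩
    · rintro ⟨hx1, hx2⟩
      refine ⟨⟨hx1, fun hx3 => ?_⟩, hx2⟩
      have : x ∈ A ∩ A' ∩ T := ⟨⟨hx1, hx3⟩, hx2⟩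
      rw [hd] at this; exact this
  rw [h1, hadd _ (alg_diff hB hA hA') _ hA' disjoint_sdiff_left, h2]

open Classical in
/-- Extension of μ to sets of the form `(A₁ ∩ D) ∪ (A₂ ∩ Dᶜ)`. -/
noncomputable def extMeas (μ : Set X → ℝ) (B : Set (Set X)) (D : Set X)
    (E : Set X) : ℝ :=
  if h : ∃ A₁ A₂ : Set X, (A₁ ∈ B ∧ A₂ ∈ B) ∧ E = (A₁ ∩ D) ∪ (A₂ ∩ Dᶜ)
  then innerF μ B D h.choose + gF μ B D h.choose_spec.choose
  else 0

lemma rep_trace₁ {A₁ A₂ A₁' A₂' D : Set X}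
    (h : (A₁ ∩ D) ∪ (A₂ ∩ Dᶜ) = (A₁' ∩ D) ∪ (A₂' ∩ Dᶜ)) : A₁ ∩ D = A₁' ∩ D := by
  ext x
  have hx := Set.ext_iff.mp h x
  simp only [mem_union, mem_inter_iff, mem_compl_iff] at hx ⊢
  tauto

lemma rep_trace₂ {A₁ A₂ A₁' A₂' D : Set X}
    (h : (A₁ ∩ D) ∪ (A₂ ∩ Dᶜ) = (A₁' ∩ D) ∪ (A₂' ∩ Dᶜ)) : A₂ ∩ Dᶜ = A₂' ∩ Dᶜ := by
  ext x
  have hx := Set.ext_iff.mp h x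
  simp only [mem_union, mem_inter_iff, mem_compl_iff] at hx ⊢
  tauto

lemma extMeas_eval (hB : IsSetAlg B) (hμ : IsFinAddProb B μ) {A₁ A₂ : Set X}
    (D : Set X) (hA₁ : A₁ ∈ B) (hA₂ : A₂ ∈ B) :
    extMeas μ B D ((A₁ ∩ D) ∪ (A₂ ∩ Dᶜ)) = innerF μ B D A₁ + gF μ B D A₂ := by
  have hex : ∃ A₁' A₂' : Set X, (A₁' ∈ B ∧ A₂' ∈ B) ∧
      (A₁ ∩ D) ∪ (A₂ ∩ Dᶜ) = (A₁' ∩ D) ∪ (A₂' ∩ Dᶜ) := ⟨A₁, A₂, ⟨hA₁, hA₂⟩, rfl⟩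
  rw [extMeas, dif_pos hex]
  obtain ⟨⟨hc1, hc2⟩, hceq⟩ := hex.choose_spec.choose_spec
  rw [innerF_trace D (rep_trace₁ hceq).symm, gF_trace hB hμ hc2 hA₂ (rep_trace₂ hceq).symm]


def repSet (B : Set (Set X)) (D : Set X) : Set (Set X) :=
  {E | ∃ A₁ A₂ : Set X, (A₁ ∈ B ∧ A₂ ∈ B) ∧ E = (A₁ ∩ D) ∪ (A₂ ∩ Dᶜ)}

lemma repSet_isSetAlg (hB : IsSetAlg B) (D : Set X) : IsSetAlg (repSet B D) := by
  refine ⟨⟨∅, ∅, ⟨hB.1, hB.1⟩, by simp⟩, ?_, ?_⟩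
  · rintro E ⟨A₁, A₂, ⟨hA₁, hA₂⟩, rfl⟩
    refine ⟨A₁ᶜ, A₂ᶜ, ⟨hB.2.1 _ hA₁, hB.2.1 _ hA₂⟩, ?_⟩
    ext x
    simp only [mem_compl_iff, mem_union, mem_inter_iff]
    by_cases hx : x ∈ D <;> simp [hx]
  · rintro E ⟨A₁, A₂, ⟨hA₁, hA₂⟩, rfl⟩ E' ⟨A₁', A₂', ⟨hA₁', hA₂'⟩, rfl⟩
    refine ⟨A₁ ∪ A₁', A₂ ∪ A₂', ⟨hB.2.2 _ hA₁ _ hA₁', hB.2.2 _ hA₂ _ hA₂'⟩, ?_⟩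
    ext x
    simp only [mem_union, mem_inter_iff]
    tauto

lemma repSet_superset (hB : IsSetAlg B) (D : Set X) : B ∪ {D} ⊆ repSet B D := by
  rintro E (hE | hE)
  · exact ⟨E, E, ⟨hE, hE⟩, (Set.inter_union_compl E D).symm⟩
  · rw [Set.mem_singleton_iff] at hE
    subst hE
    exact ⟨univ, ∅, ⟨alg_univ hB, hB.1⟩, by simp⟩

lemma genAlg_subset_repSet (hB : IsSetAlg B) (D : Set X) :
    genAlg (B ∪ {D}) ⊆ repSet B D := fun E hE =>
  hE (repSet B D) ⟨repSet_isSetAlg hB D, repSet_superset hB D⟩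

lemma repSet_compl (D : Set X) : repSet B D ⊆ repSet B Dᶜ := by
  rintro E ⟨A₁, A₂, ⟨hA₁, hA₂⟩, rfl⟩
  exact ⟨A₂, A₁, ⟨hA₂, hA₁⟩, by rw [compl_compl, Set.union_comm]⟩

lemma extMeas_nonneg (hB : IsSetAlg B) (hμ : IsFinAddProb B μ) {D E : Set X}
    (hE : E ∈ repSet B D) : 0 ≤ extMeas μ B D E := by
  obtain ⟨A₁, A₂, ⟨hA₁, hA₂⟩, rfl⟩ := hE
  rw [extMeas_eval hB hμ D hA₁ hA₂]
  exact add_nonneg (innerF_nonneg hB hμ hA₁ D) (gF_nonneg hB hμ hA₂ D)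

lemma extMeas_univ (hB : IsSetAlg B) (hμ : IsFinAddProb B μ) (D : Set X) :
    extMeas μ B D univ = 1 := by
  have h : (univ : Set X) = (univ ∩ D) ∪ (univ ∩ Dᶜ) := by simp
  rw [h, extMeas_eval hB hμ D (alg_univ hB) (alg_univ hB), gF, hμ.1]
  ring

lemma extMeas_of_mem (hB : IsSetAlg B) (hμ : IsFinAddProb B μ) {D A : Set X}
    (hA : A ∈ B) : extMeas μ B D A = μ A := by
  have h : A = (A ∩ D) ∪ (A ∩ Dᶜ) := (Set.inter_union_compl A D).symm
  conv_lhs => rw [h]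
  rw [extMeas_eval hB hμ D hA hA, gF]
  ring

lemma innerF_empty (hB : IsSetAlg B) (hμ : IsFinAddProb B μ) (D : Set X) :
    innerF μ B D ∅ = 0 := by
  refine le_antisymm ?_ (innerF_nonneg hB hμ hB.1 D)
  rw [← mu_empty hB hμ]
  exact innerF_le hB hμ hB.1 D

lemma extMeas_self (hB : IsSetAlg B) (hμ : IsFinAddProb B μ) (D : Set X) :
    extMeas μ B D D = innerF μ B D univ := by
  have h : D = (univ ∩ D) ∪ (∅ ∩ Dᶜ) := by simp
  nth_rewrite 2 [h]
  rw [extMeas_eval hB hμ D (alg_univ hB) hB.1, gF,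
    innerF_empty hB hμ D, mu_empty hB hμ]
  ring

lemma extMeas_compl_self (hB : IsSetAlg B) (hμ : IsFinAddProb B μ) (D : Set X) :
    extMeas μ B D Dᶜ = 1 - innerF μ B D univ := by
  have h : Dᶜ = (∅ ∩ D) ∪ (univ ∩ Dᶜ) := by simp
  rw [h, extMeas_eval hB hμ D hB.1 (alg_univ hB), gF,
    innerF_empty hB hμ D, hμ.1]
  ring

lemma innerF_trace_zero (hB : IsSetAlg B) (hμ : IsFinAddProb B μ) {D A A' : Set X}
    (hA : A ∈ B) (hA' : A' ∈ B) (hd : A ∩ A' ∩ D = ∅) :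
    innerF μ B D (A ∪ A') = innerF μ B D A + innerF μ B D A' :=
  quasiAdd hB (innerF μ B D) D (fun _ h1 _ h2 h3 => innerF_add hB hμ D h1 h2 h3)
    (fun _ _ _ _ h => innerF_trace D h) hA hA' hd

lemma gF_trace_zero (hB : IsSetAlg B) (hμ : IsFinAddProb B μ) {D A A' : Set X}
    (hA : A ∈ B) (hA' : A' ∈ B) (hd : A ∩ A' ∩ Dᶜ = ∅) :
    gF μ B D (A ∪ A') = gF μ B D A + gF μ B D A' :=
  quasiAdd hB (gF μ B D) Dᶜ (fun _ h1 _ h2 h3 => gF_add hB hμ D h1 h2 h3)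
    (fun _ h1 _ h2 h => gF_trace hB hμ h1 h2 h) hA hA' hd

lemma extMeas_add (hB : IsSetAlg B) (hμ : IsFinAddProb B μ) {D E E' : Set X}
    (hE : E ∈ repSet B D) (hE' : E' ∈ repSet B D) (hd : Disjoint E E') :
    extMeas μ B D (E ∪ E') = extMeas μ B D E + extMeas μ B D E' := by
  obtain ⟨A₁, A₂, ⟨hA₁, hA₂⟩, rfl⟩ := hE
  obtain ⟨A₁', A₂', ⟨hA₁', hA₂'⟩, rfl⟩ := hE'
  rw [Set.disjoint_iff_inter_eq_empty] at hd
  have hd1 : A₁ ∩ A₁' ∩ D = ∅ := by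
    rw [Set.eq_empty_iff_forall_notMem]
    rintro x ⟨⟨hx1, hx1'⟩, hxD⟩
    have : x ∈ ((A₁ ∩ D) ∪ (A₂ ∩ Dᶜ)) ∩ ((A₁' ∩ D) ∪ (A₂' ∩ Dᶜ)) :=
      ⟨Or.inl ⟨hx1, hxD⟩, Or.inl ⟨hx1', hxD⟩⟩
    rw [hd] at this; exact this
  have hd2 : A₂ ∩ A₂' ∩ Dᶜ = ∅ := by
    rw [Set.eq_empty_iff_forall_notMem]
    rintro x ⟨⟨hx2, hx2'⟩, hxD⟩
    have : x ∈ ((A₁ ∩ D) ∪ (A₂ ∩ Dᶜ)) ∩ ((A₁' ∩ D) ∪ (A₂' ∩ Dᶜ)) :=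
      ⟨Or.inr ⟨hx2, hxD⟩, Or.inr ⟨hx2', hxD⟩⟩
    rw [hd] at this; exact this
  have hre : ((A₁ ∩ D) ∪ (A₂ ∩ Dᶜ)) ∪ ((A₁' ∩ D) ∪ (A₂' ∩ Dᶜ)) =
      ((A₁ ∪ A₁') ∩ D) ∪ ((A₂ ∪ A₂') ∩ Dᶜ) := by
    ext x
    simp only [mem_union, mem_inter_iff]
    tauto
  rw [hre, extMeas_eval hB hμ D (hB.2.2 _ hA₁ _ hA₁') (hB.2.2 _ hA₂ _ hA₂'),
    extMeas_eval hB hμ D hA₁ hA₂, extMeas_eval hB hμ D hA₁' hA₂',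
    innerF_trace_zero hB hμ hA₁ hA₁' hd1, gF_trace_zero hB hμ hA₂ hA₂' hd2]
  ring

end Aux

theorem stmt_0 {X : Type*} (B : Set (Set X)) (hB : IsSetAlg B)
    (μ : Set X → ℝ) (hμ : IsFinAddProb B μ) (D : Set X) (r : ℝ)
    (hr : r ∈ Set.Icc (0 : ℝ) 1)
    (hlow : ∀ A ∈ B, A ⊆ D → μ A ≤ r)
    (hhigh : ∀ A ∈ B, D ⊆ A → r ≤ μ A) :
    ∃ μ' : Set X → ℝ, IsFinAddProb (genAlg (B ∪ {D})) μ' ∧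
      (∀ A ∈ B, μ' A = μ A) ∧ μ' D = r := by
  classical
  set p := innerF μ B D univ with hp_def
  set q := 1 - innerF μ B Dᶜ univ with hq_def
  have hp_le : p ≤ r := by
    rw [hp_def, innerF]
    refine csSup_le ⟨0, innerF_zero_mem hB hμ D univ⟩ ?_
    rintro x ⟨C, ⟨hC, hCD⟩, rfl⟩
    simpa only [Set.univ_inter] using hlow C hC hCD
  have hr_le_q : r ≤ q := by
    rw [hq_def, le_sub_iff_add_le, ← le_sub_iff_add_le']
    rw [innerF]
    refine csSup_le ⟨0, innerF_zero_mem hB hμ Dᶜ univ⟩ ?_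
    rintro x ⟨C, ⟨hC, hCD⟩, rfl⟩
    have hDC : D ⊆ Cᶜ := Set.subset_compl_comm.mp hCD
    have := hhigh Cᶜ (hB.2.1 C hC) hDC
    rw [mu_compl hB hμ hC] at this
    simp only [Set.univ_inter]
    linarith
  set t : ℝ := if q ≤ p then 0 else (r - p) / (q - p) with ht_def
  have ht0 : 0 ≤ t := by
    rw [ht_def]
    split_ifs with h
    · norm_num
    · exact div_nonneg (by linarith) (by push_neg at h; linarith)
  have ht1 : t ≤ 1 := by
    rw [ht_def]
    split_ifs with h
    · norm_num
    · push_neg at h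
      rw [div_le_one (by linarith)]
      linarith
  have hcomb : (1 - t) * p + t * q = r := by
    rw [ht_def]
    split_ifs with h
    · have : p = r := le_antisymm hp_le (by linarith)
      rw [this]; ring
    · push_neg at h
      have hne : q - p ≠ 0 := sub_ne_zero.mpr (ne_of_gt h)
      field_simp
      ring
  refine ⟨fun E => (1 - t) * extMeas μ B D E + t * extMeas μ B Dᶜ E, ⟨?_, ?_, ?_⟩, ?_, ?_⟩
  · show (1 - t) * extMeas μ B D univ + t * extMeas μ B Dᶜ univ = 1
    rw [extMeas_univ hB hμ D, extMeas_univ hB hμ Dᶜ]; ring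
  · intro E hE
    have hE1 : E ∈ repSet B D := genAlg_subset_repSet hB D hE
    have hE2 : E ∈ repSet B Dᶜ := repSet_compl D hE1
    exact add_nonneg (mul_nonneg (by linarith) (extMeas_nonneg hB hμ hE1))
      (mul_nonneg ht0 (extMeas_nonneg hB hμ hE2))
  · intro E hE E' hE' hd
    have hE1 : E ∈ repSet B D := genAlg_subset_repSet hB D hE
    have hE2 : E ∈ repSet B Dᶜ := repSet_compl D hE1
    have hE1' : E' ∈ repSet B D := genAlg_subset_repSet hB D hE'
    have hE2' : E' ∈ repSet B Dᶜ := repSet_compl D hE1'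
    show (1 - t) * extMeas μ B D (E ∪ E') + t * extMeas μ B Dᶜ (E ∪ E') =
      ((1 - t) * extMeas μ B D E + t * extMeas μ B Dᶜ E) +
      ((1 - t) * extMeas μ B D E' + t * extMeas μ B Dᶜ E')
    rw [extMeas_add hB hμ hE1 hE1' hd, extMeas_add hB hμ hE2 hE2' hd]
    ring
  · intro A hA
    show (1 - t) * extMeas μ B D A + t * extMeas μ B Dᶜ A = μ A
    rw [extMeas_of_mem hB hμ hA, extMeas_of_mem hB hμ hA]
    ring
  · have h1 : extMeas μ B D D = p := extMeas_self hB hμ D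
    have h2 : extMeas μ B Dᶜ D = q := by
      have := extMeas_compl_self hB hμ (X := X) Dᶜ
      rw [compl_compl] at this
      rw [this]
    show (1 - t) * extMeas μ B D D + t * extMeas μ B Dᶜ D = r
    rw [h1, h2, hcomb]
end

section
/- Let μ be a finitely additive probability measure on the power set of X and λ a finitely additive probability measure on the power set of Y, and let μ × λ denote the induced finitely additive measure on the Boolean algebra of X × Y generated by rectangles. Suppose D ⊆ X × Y is such that for every ε > 0 there exist sets D⁻ and D⁺, each a finite union of rectangles, with D⁻ ⊆ D ⊆ D⁺ and (μ × λ)(D⁺) − (μ × λ)(D⁻) ≤ ε. Then there is exactly one value r such that every finitely additive probability measure ω on the Boolean algebra generated by rectangles together with D, which agrees with μ × λ on rectangles, satisfies ω(D) = r; namely r = inf over ε of (μ × λ)(D⁺_ε) = sup over ε of (μ × λ)(D⁻_ε). -/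
/-- A finitely additive probability measure defined on the full power set. -/
def IsFAP {X : Type*} (m : Set X → ℝ) : Prop :=
  m Set.univ = 1 ∧ (∀ A, 0 ≤ m A) ∧
    ∀ A C : Set X, Disjoint A C → m (A ∪ C) = m A + m C

/-- A finite union of rectangles. -/
def IsRectUnion {X Y : Type*} (P : Set (X × Y)) : Prop :=
  ∃ (n : ℕ) (A : Fin n → Set X) (B : Fin n → Set Y), P = ⋃ i, A i ×ˢ B i

/-! Existence of a product measure is the substance. On rectangle step functions
`∑ cᵢ 𝟙_{Aᵢ ×ˢ Bᵢ}` the functional `∑ cᵢ μ(Aᵢ) l(Bᵢ)` is positive (integrate in `x` for each fixed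
`y`, then in `y`), so by M. Riesz's extension theorem it extends to a positive linear functional on
`ℓ^∞(X × Y)`; its values on indicators form a product measure `ω₀`. Any two product measures agree
on finite unions of rectangles by inclusion–exclusion, so by monotonicity every product measure
gives `D` a value within `ε` of `ω₀ D`. -/

open scoped ENNReal

def IsFinitelyAdditive {X : Type*} (m : Set X → ℝ) : Prop :=
  ∀ A C : Set X, Disjoint A C → m (A ∪ C) = m A + m C

namespace IsFinitelyAdditive

variable {X : Type*} {m : Set X → ℝ}

lemma empty (hm : IsFinitelyAdditive m) : m ∅ = 0 := by
  simpa using hm ∅ ∅ disjoint_bot_left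

lemma inter_add_diff (hm : IsFinitelyAdditive m) (S A : Set X) :
    m (S ∩ A) + m (S \ A) = m S := by
  rw [← hm _ _ Set.disjoint_sdiff_inter.symm, Set.inter_union_sdiff]

lemma union_add_inter (hm : IsFinitelyAdditive m) (A B : Set X) :
    m (A ∪ B) + m (A ∩ B) = m A + m B := by
  have h₁ := hm.inter_add_diff (A ∪ B) A
  have h₂ := hm.inter_add_diff B A
  rw [Set.union_inter_cancel_left, Set.union_sdiff_left] at h₁
  rw [Set.inter_comm] at h₂
  linarith

lemma mono (hm : IsFinitelyAdditive m) (h₀ : ∀ A, 0 ≤ m A) {A B : Set X} (h : A ⊆ B) :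
    m A ≤ m B := by
  have := hm.inter_add_diff B A
  rw [Set.inter_eq_right.2 h] at this
  linarith [h₀ (B \ A)]

/-- Splitting `B` along `A a` removes one set from the family at the price of a constant. -/
lemma add_sum_nonneg_of_nonneg_on (hm : IsFinitelyAdditive m) (h₀ : ∀ A, 0 ≤ m A)
    {ι : Type*} (c : ι → ℝ) (A : ι → Set X) (s : Finset ι) :
    ∀ (c₀ : ℝ) (B : Set X), (∀ x ∈ B, 0 ≤ c₀ + ∑ i ∈ s, c i * (A i).indicator 1 x) →
      0 ≤ c₀ * m B + ∑ i ∈ s, c i * m (B ∩ A i) := by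
  classical
  induction s using Finset.induction_on with
  | empty =>
    intro c₀ B hB
    rcases B.eq_empty_or_nonempty with rfl | ⟨x, hx⟩
    · simp [hm.empty]
    · simpa using mul_nonneg (by simpa using hB x hx) (h₀ B)
  | @insert a s ha ih =>
    intro c₀ B hB
    have hin := ih (c₀ + c a) (B ∩ A a) fun x hx => by
      simpa [ha, Set.indicator_of_mem hx.2, add_assoc] using hB x hx.1
    have hout := ih c₀ (B \ A a) fun x hx => by
      simpa [ha, Set.indicator_of_notMem hx.2] using hB x hx.1
    have hsplit : ∀ i, m (B ∩ A i) = m (B ∩ A a ∩ A i) + m (B \ A a ∩ A i) := fun i => by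
      rw [Set.inter_right_comm, Set.sdiff_inter_right_comm, hm.inter_add_diff]
    rw [Finset.sum_insert ha, Finset.sum_congr rfl fun i _ => by rw [hsplit i, mul_add],
      Finset.sum_add_distrib, ← hm.inter_add_diff B (A a)]
    linarith

lemma sum_mul_nonneg_of_sum_indicator_nonneg (hm : IsFinitelyAdditive m) (h₀ : ∀ A, 0 ≤ m A)
    {ι : Type*} (c : ι → ℝ) (A : ι → Set X) (s : Finset ι)
    (h : ∀ x, 0 ≤ ∑ i ∈ s, c i * (A i).indicator 1 x) : 0 ≤ ∑ i ∈ s, c i * m (A i) := by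
  simpa using hm.add_sum_nonneg_of_nonneg_on h₀ c A s 0 Set.univ fun x _ => by simpa using h x

end IsFinitelyAdditive

lemma IsFAP.isFinitelyAdditive {X : Type*} {m : Set X → ℝ} (hm : IsFAP m) :
    IsFinitelyAdditive m :=
  hm.2.2

lemma IsFAP.mono {X : Type*} {m : Set X → ℝ} (hm : IsFAP m) {A B : Set X} (h : A ⊆ B) :
    m A ≤ m B :=
  hm.isFinitelyAdditive.mono hm.2.1 h

lemma IsFinitelyAdditive.eq_of_isRectUnion {X Y : Type*} {w w' : Set (X × Y) → ℝ}
    (hw : IsFinitelyAdditive w) (hw' : IsFinitelyAdditive w')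
    (hrect : ∀ A B, w (A ×ˢ B) = w' (A ×ˢ B)) {P : Set (X × Y)} (hP : IsRectUnion P) :
    w P = w' P := by
  obtain ⟨n, A, B, rfl⟩ := hP
  induction n with
  | zero => simp [hw.empty, hw'.empty]
  | succ n ih =>
    have hinter : A 0 ×ˢ B 0 ∩ ⋃ i : Fin n, A i.succ ×ˢ B i.succ
        = ⋃ i : Fin n, (A 0 ∩ A i.succ) ×ˢ (B 0 ∩ B i.succ) := by
      simp only [Set.inter_iUnion, Set.prod_inter_prod]
    have h := hw.union_add_inter (A 0 ×ˢ B 0) (⋃ i : Fin n, A i.succ ×ˢ B i.succ)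
    have h' := hw'.union_add_inter (A 0 ×ˢ B 0) (⋃ i : Fin n, A i.succ ×ˢ B i.succ)
    rw [hinter] at h h'
    rw [Set.iUnion_fin_add_one_eq_iUnion_succ]
    simp only [Function.comp_def]
    linarith [hrect (A 0) (B 0), ih (fun i => A i.succ) (fun i => B i.succ),
      ih (fun i => A 0 ∩ A i.succ) (fun i => B 0 ∩ B i.succ)]

lemma sum_mul_mul_nonneg_of_sum_indicator_prod_nonneg {X Y : Type*} {μ : Set X → ℝ} {l : Set Y → ℝ}
    (hμ : IsFinitelyAdditive μ) (hμ₀ : ∀ A, 0 ≤ μ A)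
    (hl : IsFinitelyAdditive l) (hl₀ : ∀ B, 0 ≤ l B)
    {ι : Type*} (c : ι → ℝ) (A : ι → Set X) (B : ι → Set Y) (s : Finset ι)
    (h : ∀ z, 0 ≤ ∑ i ∈ s, c i * (A i ×ˢ B i).indicator 1 z) :
    0 ≤ ∑ i ∈ s, c i * (μ (A i) * l (B i)) := by
  have hy : ∀ y, 0 ≤ ∑ i ∈ s, c i * μ (A i) * (B i).indicator 1 y := fun y => by
    have := hμ.sum_mul_nonneg_of_sum_indicator_nonneg hμ₀ (fun i => c i * (B i).indicator 1 y) A s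
      fun x => by simpa [Set.indicator_prod_one, mul_right_comm, mul_assoc] using h (x, y)
    simpa only [mul_right_comm] using this
  simpa only [mul_assoc] using hl.sum_mul_nonneg_of_sum_indicator_nonneg hl₀ _ B s hy

theorem exists_nonneg_comp_eq {V E : Type*} [AddCommGroup V] [Module ℝ V]
    [AddCommGroup E] [Module ℝ E] (s : PointedCone ℝ E) (T : V →ₗ[ℝ] E) (J : V →ₗ[ℝ] ℝ)
    (nonneg : ∀ v, T v ∈ s → 0 ≤ J v) (dense : ∀ y, ∃ v, T v + y ∈ s) :
    ∃ g : E →ₗ[ℝ] ℝ, g ∘ₗ T = J ∧ ∀ x ∈ s, 0 ≤ g x := by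
  have hker : LinearMap.ker T ≤ LinearMap.ker J := fun v hv => by
    rw [LinearMap.mem_ker] at hv ⊢
    have h₁ := nonneg v (by rw [hv]; exact s.zero_mem)
    have h₂ := nonneg (-v) (by rw [map_neg, hv, neg_zero]; exact s.zero_mem)
    rw [map_neg] at h₂
    linarith
  let f : E →ₗ.[ℝ] ℝ :=
    ⟨LinearMap.range T, (LinearMap.ker T).liftQ J hker ∘ₗ T.quotKerEquivRange.symm.toLinearMap⟩
  have hf : ∀ v, f ⟨T v, LinearMap.mem_range_self T v⟩ = J v := fun v => by
    simp [f, LinearMap.quotKerEquivRange_symm_apply_image]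
  obtain ⟨g, hgf, hg⟩ := riesz_extension s f
    (fun ⟨_, v, rfl⟩ hv => (hf v).symm ▸ nonneg v hv)
    (fun y => let ⟨v, hv⟩ := dense y; ⟨⟨T v, LinearMap.mem_range_self T v⟩, hv⟩)
  exact ⟨g, LinearMap.ext fun v => (hgf ⟨T v, _⟩).trans (hf v), hg⟩

noncomputable def lpIndicator {Z : Type*} (S : Set Z) : lp (fun _ : Z => ℝ) ∞ :=
  ⟨S.indicator 1, memℓp_infty ⟨1, by
    rintro _ ⟨z, rfl⟩
    by_cases hz : z ∈ S <;> simp [hz]⟩⟩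

@[simp]
lemma coe_lpIndicator {Z : Type*} (S : Set Z) : ⇑(lpIndicator S) = S.indicator 1 := rfl

lemma lpIndicator_union {Z : Type*} {A C : Set Z} (h : Disjoint A C) :
    lpIndicator (A ∪ C) = lpIndicator A + lpIndicator C :=
  Subtype.ext (Set.indicator_union_of_disjoint h 1)

def lpNonnegCone (Z : Type*) : PointedCone ℝ (lp (fun _ : Z => ℝ) ∞) where
  carrier := {h | ∀ z, 0 ≤ h z}
  add_mem' hf hg z := add_nonneg (hf z) (hg z)
  zero_mem' _ := le_rfl
  smul_mem' c _ hf z := mul_nonneg c.2 (hf z)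

theorem exists_isFAP_prod {X Y : Type*} {μ : Set X → ℝ} {l : Set Y → ℝ}
    (hμ : IsFAP μ) (hl : IsFAP l) :
    ∃ ω : Set (X × Y) → ℝ, IsFAP ω ∧ ∀ A B, ω (A ×ˢ B) = μ A * l B := by
  let T : (Set X × Set Y →₀ ℝ) →ₗ[ℝ] lp (fun _ : X × Y => ℝ) ∞ :=
    Finsupp.linearCombination ℝ fun R => lpIndicator (R.1 ×ˢ R.2)
  let J : (Set X × Set Y →₀ ℝ) →ₗ[ℝ] ℝ := Finsupp.linearCombination ℝ fun R => μ R.1 * l R.2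
  have hT : ∀ r z, T r z = ∑ R ∈ r.support, r R * (R.1 ×ˢ R.2).indicator 1 z := fun r z => by
    simp only [T, Finsupp.linearCombination_apply, Finsupp.sum, lp.coeFn_sum, lp.coeFn_smul,
      coe_lpIndicator]
    exact Finset.sum_apply (M := fun _ => ℝ) z _ _
  obtain ⟨g, hgJ, hg⟩ := exists_nonneg_comp_eq (lpNonnegCone (X × Y)) T J
    (fun r hr => by
      simpa [J, Finsupp.linearCombination_apply, Finsupp.sum] using
        sum_mul_mul_nonneg_of_sum_indicator_prod_nonneg hμ.isFinitelyAdditive hμ.2.1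
          hl.isFinitelyAdditive hl.2.1 r Prod.fst Prod.snd r.support fun z => (hT r z) ▸ hr z)
    (fun y => ⟨Finsupp.single (Set.univ, Set.univ) ‖y‖, fun z => by
      have := neg_le_of_abs_le (lp.norm_apply_le_norm ENNReal.top_ne_zero y z)
      simp only [T, Finsupp.linearCombination_single, lp.coeFn_add, lp.coeFn_smul,
        coe_lpIndicator, Set.univ_prod_univ, Set.indicator_univ, Pi.add_apply, Pi.smul_apply,
        Pi.one_apply, smul_eq_mul, mul_one]
      linarith⟩)
  have hrect : ∀ A B, g (lpIndicator (A ×ˢ B)) = μ A * l B := fun A B => by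
    simpa [T, J] using LinearMap.congr_fun hgJ (Finsupp.single (A, B) 1)
  refine ⟨fun S => g (lpIndicator S), ⟨?_, fun S => hg _ fun z => ?_, fun A C hAC => ?_⟩, hrect⟩
  · rw [← Set.univ_prod_univ]
    dsimp only
    rw [hrect, hμ.1, hl.1, one_mul]
  · exact Set.indicator_nonneg (fun _ _ => zero_le_one) z
  · dsimp only
    rw [lpIndicator_union hAC, map_add]

theorem stmt_2 {X Y : Type*} (μ : Set X → ℝ) (l : Set Y → ℝ)
    (hμ : IsFAP μ) (hl : IsFAP l) (D : Set (X × Y))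
    (happrox : ∀ ε > (0 : ℝ), ∃ Dm Dp : Set (X × Y),
      IsRectUnion Dm ∧ IsRectUnion Dp ∧ Dm ⊆ D ∧ D ⊆ Dp ∧
      ∀ ω : Set (X × Y) → ℝ, IsFAP ω → (∀ (A : Set X) (B : Set Y), ω (A ×ˢ B) = μ A * l B) →
        ω Dp - ω Dm ≤ ε) :
    ∃! r : ℝ, ∀ ω : Set (X × Y) → ℝ, IsFAP ω →
      (∀ (A : Set X) (B : Set Y), ω (A ×ˢ B) = μ A * l B) → ω D = r := by
  obtain ⟨ω₀, hω₀, hω₀rect⟩ := exists_isFAP_prod hμ hl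
  refine ⟨ω₀ D, fun ω hω hωrect => eq_of_forall_dist_le fun ε hε => ?_,
    fun r hr => (hr ω₀ hω₀ hω₀rect).symm⟩
  obtain ⟨Dm, Dp, hDm, hDp, hDmD, hDDp, hgap⟩ := happrox ε hε
  have hrect : ∀ A B, ω (A ×ˢ B) = ω₀ (A ×ˢ B) := fun A B => (hωrect A B).trans (hω₀rect A B).symm
  have hm := hω.isFinitelyAdditive.eq_of_isRectUnion hω₀.isFinitelyAdditive hrect hDm
  have hp := hω.isFinitelyAdditive.eq_of_isRectUnion hω₀.isFinitelyAdditive hrect hDp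
  rw [Real.dist_eq, abs_le]
  constructor <;> linarith [hω.mono hDmD, hω.mono hDDp, hω₀.mono hDmD, hω₀.mono hDDp,
    hgap ω hω hωrect]
end

section
/- Conversely to the above: let μ, λ be finitely additive probability measures on the power sets of X and Y respectively, and D ⊆ X × Y. If there exist sets D⁻ ∈ R contained in D and D⁺ ∈ R containing D (R the Boolean algebra generated by rectangles) with inf over such D⁺ of (μ×λ)(D⁺) strictly greater than sup over such D⁻ of (μ×λ)(D⁻), then there exist two distinct finitely additive probability measures on the Boolean algebra generated by R ∪ {D} both extending μ × λ on rectangles but assigning different values to D. -/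
section Aux

variable {Z : Type*}

lemma isSetAlg_genAlg (S : Set (Set Z)) : IsSetAlg (genAlg S) := by
  refine ⟨?_, ?_, ?_⟩
  · exact Set.mem_sInter.2 fun B hB => hB.1.1
  · intro A hA
    exact Set.mem_sInter.2 fun B hB => hB.1.2.1 A (Set.mem_sInter.1 hA B hB)
  · intro A hA C hC
    exact Set.mem_sInter.2 fun B hB =>
      hB.1.2.2 A (Set.mem_sInter.1 hA B hB) C (Set.mem_sInter.1 hC B hB)

lemma subset_genAlg (S : Set (Set Z)) : S ⊆ genAlg S :=
  fun A hA => Set.mem_sInter.2 fun _ hB => hB.2 hA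

lemma genAlg_min {S C : Set (Set Z)} (hC : IsSetAlg C) (hS : S ⊆ C) : genAlg S ⊆ C :=
  Set.sInter_subset_of_mem ⟨hC, hS⟩

variable {B : Set (Set Z)} {m : Set Z → ℝ}

lemma univ_mem (hB : IsSetAlg B) : (Set.univ : Set Z) ∈ B := by
  have := hB.2.1 ∅ hB.1; simpa using this

lemma inter_mem (hB : IsSetAlg B) {A C : Set Z} (hA : A ∈ B) (hC : C ∈ B) :
    A ∩ C ∈ B := by
  have := hB.2.1 _ (hB.2.2 _ (hB.2.1 A hA) _ (hB.2.1 C hC))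
  simpa using this

lemma diff_mem (hB : IsSetAlg B) {A C : Set Z} (hA : A ∈ B) (hC : C ∈ B) :
    A \ C ∈ B := by
  have := inter_mem hB hA (hB.2.1 C hC)
  simpa [Set.diff_eq] using this

lemma m_empty (hB : IsSetAlg B) (hm : IsFinAddProb B m) : m ∅ = 0 := by
  have := hm.2.2 ∅ hB.1 ∅ hB.1 (by simp)
  simp at this; linarith

lemma m_diff (hB : IsSetAlg B) (hm : IsFinAddProb B m) {A C : Set Z}
    (hA : A ∈ B) (hC : C ∈ B) (hsub : A ⊆ C) : m (C \ A) = m C - m A := by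
  have hd : C \ A ∈ B := diff_mem hB hC hA
  have := hm.2.2 A hA (C \ A) hd disjoint_sdiff_self_right
  rw [Set.union_diff_cancel hsub] at this
  linarith

lemma m_mono (hB : IsSetAlg B) (hm : IsFinAddProb B m) {A C : Set Z}
    (hA : A ∈ B) (hC : C ∈ B) (hsub : A ⊆ C) : m A ≤ m C := by
  have h1 := m_diff hB hm hA hC hsub
  have h2 := hm.2.1 (C \ A) (diff_mem hB hC hA)
  linarith

lemma m_le_one (hB : IsSetAlg B) (hm : IsFinAddProb B m) {A : Set Z}
    (hA : A ∈ B) : m A ≤ 1 := by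
  have := m_mono hB hm hA (univ_mem hB) (Set.subset_univ A)
  rw [hm.1] at this; exact this

/-- outer measure -/
noncomputable def outM (B : Set (Set Z)) (m : Set Z → ℝ) (T : Set Z) : ℝ :=
  sInf {v : ℝ | ∃ U ∈ B, T ⊆ U ∧ v = m U}

/-- inner measure -/
noncomputable def innM (B : Set (Set Z)) (m : Set Z → ℝ) (T : Set Z) : ℝ :=
  sSup {v : ℝ | ∃ C ∈ B, C ⊆ T ∧ v = m C}

lemma out_le (hm : IsFinAddProb B m) {T U : Set Z} (hU : U ∈ B) (hTU : T ⊆ U) :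
    outM B m T ≤ m U := by
  apply csInf_le
  · refine ⟨0, ?_⟩
    rintro v ⟨U', hU', -, rfl⟩
    exact hm.2.1 U' hU'
  · exact ⟨U, hU, hTU, rfl⟩

lemma le_out (hB : IsSetAlg B) {T : Set Z} {x : ℝ}
    (h : ∀ U ∈ B, T ⊆ U → x ≤ m U) : x ≤ outM B m T := by
  refine le_csInf ⟨m Set.univ, Set.univ, univ_mem hB, Set.subset_univ T, rfl⟩ ?_
  rintro v ⟨U, hU, hTU, rfl⟩
  exact h U hU hTU

lemma le_inn (hB : IsSetAlg B) (hm : IsFinAddProb B m) {T C : Set Z}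
    (hC : C ∈ B) (hCT : C ⊆ T) : m C ≤ innM B m T := by
  apply le_csSup
  · refine ⟨1, ?_⟩
    rintro v ⟨C', hC', -, rfl⟩
    exact m_le_one hB hm hC'
  · exact ⟨C, hC, hCT, rfl⟩

lemma inn_le (hB : IsSetAlg B) {T : Set Z} {x : ℝ}
    (h : ∀ C ∈ B, C ⊆ T → m C ≤ x) : innM B m T ≤ x := by
  refine csSup_le ⟨m ∅, ∅, hB.1, Set.empty_subset T, rfl⟩ ?_
  rintro v ⟨C, hC, hCT, rfl⟩
  exact h C hC hCT

lemma out_nonneg (hB : IsSetAlg B) (hm : IsFinAddProb B m) (T : Set Z) :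
    0 ≤ outM B m T :=
  le_out hB fun U hU _ => hm.2.1 U hU

lemma inn_nonneg (hB : IsSetAlg B) (hm : IsFinAddProb B m) (T : Set Z) :
    0 ≤ innM B m T := by
  have := le_inn hB hm hB.1 (Set.empty_subset T)
  rwa [m_empty hB hm] at this

lemma out_empty (hB : IsSetAlg B) (hm : IsFinAddProb B m) :
    outM B m (∅ : Set Z) = 0 := by
  refine le_antisymm ?_ (out_nonneg hB hm ∅)
  have := out_le hm hB.1 (subset_refl (∅ : Set Z))
  rwa [m_empty hB hm] at this

lemma inn_empty (hB : IsSetAlg B) (hm : IsFinAddProb B m) :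
    innM B m (∅ : Set Z) = 0 := by
  refine le_antisymm ?_ (inn_nonneg hB hm ∅)
  apply inn_le hB
  intro C hC hCe
  rw [Set.subset_empty_iff] at hCe
  subst hCe
  rw [m_empty hB hm]

lemma restrict (hB : IsSetAlg B) (hm : IsFinAddProb B m) (E : Set Z) {S : Set Z}
    (hS : S ∈ B) : outM B m (S ∩ E) + innM B m (S ∩ Eᶜ) = m S := by
  apply le_antisymm
  · have h : innM B m (S ∩ Eᶜ) ≤ m S - outM B m (S ∩ E) := by
      apply inn_le hB
      intro C hC hCsub
      have hCS : C ⊆ S := fun x hx => (hCsub hx).1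
      have hsub : S ∩ E ⊆ S \ C := fun x hx => ⟨hx.1, fun hxC => (hCsub hxC).2 hx.2⟩
      have h1 : outM B m (S ∩ E) ≤ m (S \ C) := out_le hm (diff_mem hB hS hC) hsub
      rw [m_diff hB hm hC hS hCS] at h1
      linarith
    linarith
  · have h : m S - innM B m (S ∩ Eᶜ) ≤ outM B m (S ∩ E) := by
      apply le_out hB
      intro U hU hsub
      have hCsub : S \ U ⊆ S ∩ Eᶜ := fun x hx => ⟨hx.1, fun hxE => hx.2 (hsub ⟨hx.1, hxE⟩)⟩
      have h1 : m (S \ U) ≤ innM B m (S ∩ Eᶜ) := le_inn hB hm (diff_mem hB hS hU) hCsub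
      have h2 : S \ U = S \ (S ∩ U) := by ext x; simp
      have h3 : m (S \ (S ∩ U)) = m S - m (S ∩ U) :=
        m_diff hB hm (inter_mem hB hS hU) hS Set.inter_subset_left
      have h4 : m (S ∩ U) ≤ m U := m_mono hB hm (inter_mem hB hS hU) hU Set.inter_subset_right
      rw [h2, h3] at h1
      linarith
    linarith

lemma outAdd (hB : IsSetAlg B) (hm : IsFinAddProb B m) (E : Set Z) {P Q : Set Z}
    (hP : P ∈ B) (hQ : Q ∈ B) (hPQ : Disjoint P Q) :
    outM B m ((P ∪ Q) ∩ E) = outM B m (P ∩ E) + outM B m (Q ∩ E) := by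
  apply le_antisymm
  · have h : outM B m ((P ∪ Q) ∩ E) - outM B m (Q ∩ E) ≤ outM B m (P ∩ E) := by
      apply le_out hB
      intro U₁ hU₁ h₁
      have h2 : outM B m ((P ∪ Q) ∩ E) - m U₁ ≤ outM B m (Q ∩ E) := by
        apply le_out hB
        intro U₂ hU₂ h₂
        have hW : (U₁ ∩ P) ∪ (U₂ ∩ Q) ∈ B :=
          hB.2.2 _ (inter_mem hB hU₁ hP) _ (inter_mem hB hU₂ hQ)
        have hWsub : (P ∪ Q) ∩ E ⊆ (U₁ ∩ P) ∪ (U₂ ∩ Q) := by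
          rintro x ⟨hx | hx, hxE⟩
          · exact Or.inl ⟨h₁ ⟨hx, hxE⟩, hx⟩
          · exact Or.inr ⟨h₂ ⟨hx, hxE⟩, hx⟩
        have h3 : outM B m ((P ∪ Q) ∩ E) ≤ m ((U₁ ∩ P) ∪ (U₂ ∩ Q)) :=
          out_le hm hW hWsub
        have hd : Disjoint (U₁ ∩ P) (U₂ ∩ Q) :=
          (hPQ.mono Set.inter_subset_right Set.inter_subset_right)
        have h4 := hm.2.2 _ (inter_mem hB hU₁ hP) _ (inter_mem hB hU₂ hQ) hd
        have h5 : m (U₁ ∩ P) ≤ m U₁ :=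
          m_mono hB hm (inter_mem hB hU₁ hP) hU₁ Set.inter_subset_left
        have h6 : m (U₂ ∩ Q) ≤ m U₂ :=
          m_mono hB hm (inter_mem hB hU₂ hQ) hU₂ Set.inter_subset_left
        linarith
      linarith
    linarith
  · apply le_out hB
    intro U hU hsub
    have h5 : outM B m (P ∩ E) ≤ m (U ∩ P) :=
      out_le hm (inter_mem hB hU hP) (fun x hx => ⟨hsub ⟨Or.inl hx.1, hx.2⟩, hx.1⟩)
    have h6 : outM B m (Q ∩ E) ≤ m (U ∩ Q) :=
      out_le hm (inter_mem hB hU hQ) (fun x hx => ⟨hsub ⟨Or.inr hx.1, hx.2⟩, hx.1⟩)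
    have hd : Disjoint (U ∩ P) (U ∩ Q) :=
      hPQ.mono Set.inter_subset_right Set.inter_subset_right
    have h4 := hm.2.2 _ (inter_mem hB hU hP) _ (inter_mem hB hU hQ) hd
    have h7 : m ((U ∩ P) ∪ (U ∩ Q)) ≤ m U := by
      apply m_mono hB hm (hB.2.2 _ (inter_mem hB hU hP) _ (inter_mem hB hU hQ)) hU
      rintro x (hx | hx) <;> exact hx.1
    linarith

lemma innAdd (hB : IsSetAlg B) (hm : IsFinAddProb B m) (E : Set Z) {P Q : Set Z}
    (hP : P ∈ B) (hQ : Q ∈ B) (hPQ : Disjoint P Q) :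
    innM B m ((P ∪ Q) ∩ E) = innM B m (P ∩ E) + innM B m (Q ∩ E) := by
  apply le_antisymm
  · apply inn_le hB
    intro C hC hCsub
    have hCP : C ∩ P ⊆ P ∩ E := fun x hx => ⟨hx.2, (hCsub hx.1).2⟩
    have hCQ : C ∩ Q ⊆ Q ∩ E := fun x hx => ⟨hx.2, (hCsub hx.1).2⟩
    have h5 : m (C ∩ P) ≤ innM B m (P ∩ E) := le_inn hB hm (inter_mem hB hC hP) hCP
    have h6 : m (C ∩ Q) ≤ innM B m (Q ∩ E) := le_inn hB hm (inter_mem hB hC hQ) hCQ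
    have hd : Disjoint (C ∩ P) (C ∩ Q) :=
      hPQ.mono Set.inter_subset_right Set.inter_subset_right
    have h4 := hm.2.2 _ (inter_mem hB hC hP) _ (inter_mem hB hC hQ) hd
    have hCeq : (C ∩ P) ∪ (C ∩ Q) = C := by
      rw [← Set.inter_union_distrib_left]
      exact Set.inter_eq_left.2 fun x hx => (hCsub hx).1
    rw [hCeq] at h4
    linarith
  · have h : innM B m (P ∩ E) ≤ innM B m ((P ∪ Q) ∩ E) - innM B m (Q ∩ E) := by
      apply inn_le hB
      intro C₁ hC₁ h₁
      have h2 : innM B m (Q ∩ E) ≤ innM B m ((P ∪ Q) ∩ E) - m C₁ := by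
        apply inn_le hB
        intro C₂ hC₂ h₂
        have hd : Disjoint C₁ C₂ :=
          hPQ.mono (fun x hx => (h₁ hx).1) (fun x hx => (h₂ hx).1)
        have h4 := hm.2.2 _ hC₁ _ hC₂ hd
        have h3 : m (C₁ ∪ C₂) ≤ innM B m ((P ∪ Q) ∩ E) := by
          apply le_inn hB hm (hB.2.2 _ hC₁ _ hC₂)
          rintro x (hx | hx)
          · exact ⟨Or.inl (h₁ hx).1, (h₁ hx).2⟩
          · exact ⟨Or.inr (h₂ hx).1, (h₂ hx).2⟩
        linarith
      linarith
    linarith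

lemma disjointify {S₁ S₂ A₁ A₂ F : Set Z} (hdisj : Disjoint S₁ S₂)
    (h1 : S₁ ∩ F = A₁ ∩ F) (h2 : S₂ ∩ F = A₂ ∩ F) :
    (A₂ \ A₁) ∩ F = S₂ ∩ F ∧ (S₁ ∪ S₂) ∩ F = (A₁ ∪ A₂ \ A₁) ∩ F := by
  constructor
  · ext x
    constructor
    · rintro ⟨⟨hx2, _⟩, hxE⟩
      rw [h2]; exact ⟨hx2, hxE⟩
    · intro hx
      have hxA : x ∈ A₂ ∩ F := by rw [← h2]; exact hx
      refine ⟨⟨hxA.1, fun hx1 => ?_⟩, hx.2⟩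
      have hxS1 : x ∈ S₁ ∩ F := by rw [h1]; exact ⟨hx1, hx.2⟩
      exact Set.disjoint_left.1 hdisj hxS1.1 hx.1
  · rw [Set.union_diff_self, Set.union_inter_distrib_right,
      Set.union_inter_distrib_right, h1, h2]

lemma extend_isFAP (hB : IsSetAlg B) (hm : IsFinAddProb B m)
    (E : Set Z) (B2 : Set (Set Z))
    (hdec : ∀ S ∈ B2, ∃ A ∈ B, ∃ C ∈ B, S ∩ E = A ∩ E ∧ S ∩ Eᶜ = C ∩ Eᶜ) :
    IsFinAddProb B2 (fun S => outM B m (S ∩ E) + innM B m (S ∩ Eᶜ)) := by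
  refine ⟨?_, ?_, ?_⟩
  · have := restrict hB hm E (univ_mem hB)
    simpa [hm.1] using this
  · intro A _
    exact add_nonneg (out_nonneg hB hm _) (inn_nonneg hB hm _)
  · intro S₁ hS₁ S₂ hS₂ hdisj
    obtain ⟨A₁, hA₁, C₁, hC₁, hE₁, hEc₁⟩ := hdec S₁ hS₁
    obtain ⟨A₂, hA₂, C₂, hC₂, hE₂, hEc₂⟩ := hdec S₂ hS₂
    have hdA := disjointify hdisj hE₁ hE₂
    have hdC := disjointify hdisj hEc₁ hEc₂
    have hout : outM B m ((S₁ ∪ S₂) ∩ E) = outM B m (S₁ ∩ E) + outM B m (S₂ ∩ E) := by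
      rw [hdA.2, outAdd hB hm E hA₁ (diff_mem hB hA₂ hA₁) disjoint_sdiff_self_right,
        hdA.1, ← hE₁]
    have hinn : innM B m ((S₁ ∪ S₂) ∩ Eᶜ) =
        innM B m (S₁ ∩ Eᶜ) + innM B m (S₂ ∩ Eᶜ) := by
      rw [hdC.2, innAdd hB hm Eᶜ hC₁ (diff_mem hB hC₂ hC₁) disjoint_sdiff_self_right,
        hdC.1, ← hEc₁]
    simp only
    rw [hout, hinn]
    ring

end Aux

theorem stmt_3 {X Y : Type*} (μ : Set X → ℝ) (l : Set Y → ℝ)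
    (hμ : IsFAP μ) (hl : IsFAP l) (D : Set (X × Y))
    (Rect : Set (Set (X × Y)))
    (hRect : Rect = {T | ∃ (A : Set X) (B : Set Y), T = A ×ˢ B})
    (ω₀ : Set (X × Y) → ℝ)
    (hω₀ : IsFinAddProb (genAlg Rect) ω₀)
    (hω₀prod : ∀ (A : Set X) (B : Set Y), ω₀ (A ×ˢ B) = μ A * l B)
    (hgap : sSup {v : ℝ | ∃ Dm ∈ genAlg Rect, Dm ⊆ D ∧ v = ω₀ Dm} <
            sInf {v : ℝ | ∃ Dp ∈ genAlg Rect, D ⊆ Dp ∧ v = ω₀ Dp}) :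
    ∃ ω₁ ω₂ : Set (X × Y) → ℝ,
      IsFinAddProb (genAlg (Rect ∪ {D})) ω₁ ∧
      IsFinAddProb (genAlg (Rect ∪ {D})) ω₂ ∧
      (∀ S ∈ genAlg Rect, ω₁ S = ω₀ S) ∧
      (∀ S ∈ genAlg Rect, ω₂ S = ω₀ S) ∧
      ω₁ D ≠ ω₂ D := by
  have hA1 : IsSetAlg (genAlg Rect) := isSetAlg_genAlg Rect
  -- decomposition of members of the extended algebra
  have hdec : ∀ S ∈ genAlg (Rect ∪ {D}),
      ∃ A ∈ genAlg Rect, ∃ C ∈ genAlg Rect, S = (A ∩ D) ∪ (C ∩ Dᶜ) := by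
    intro S hS
    set W : Set (Set (X × Y)) :=
      {T | ∃ A ∈ genAlg Rect, ∃ C ∈ genAlg Rect, T = (A ∩ D) ∪ (C ∩ Dᶜ)} with hW
    have hWalg : IsSetAlg W := by
      refine ⟨⟨∅, hA1.1, ∅, hA1.1, by simp⟩, ?_, ?_⟩
      · rintro T ⟨A, hA, C, hC, rfl⟩
        refine ⟨Aᶜ, hA1.2.1 A hA, Cᶜ, hA1.2.1 C hC, ?_⟩
        ext x; by_cases hx : x ∈ D <;> simp [hx]
      · rintro T ⟨A, hA, C, hC, rfl⟩ T' ⟨A', hA', C', hC', rfl⟩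
        refine ⟨A ∪ A', hA1.2.2 A hA A' hA', C ∪ C', hA1.2.2 C hC C' hC', ?_⟩
        ext x; by_cases hx : x ∈ D <;> simp [hx] <;> tauto
    have hsub : Rect ∪ {D} ⊆ W := by
      rintro T (hT | hT)
      · have hT' : T ∈ genAlg Rect := subset_genAlg Rect hT
        exact ⟨T, hT', T, hT', (Set.inter_union_compl T D).symm⟩
      · rw [Set.mem_singleton_iff] at hT
        subst hT
        exact ⟨Set.univ, univ_mem hA1, ∅, hA1.1, by simp⟩
    exact genAlg_min hWalg hsub hS
  have hdec1 : ∀ S ∈ genAlg (Rect ∪ {D}),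
      ∃ A ∈ genAlg Rect, ∃ C ∈ genAlg Rect, S ∩ D = A ∩ D ∧ S ∩ Dᶜ = C ∩ Dᶜ := by
    intro S hS
    obtain ⟨A, hA, C, hC, rfl⟩ := hdec S hS
    refine ⟨A, hA, C, hC, ?_, ?_⟩
    · ext x; by_cases hx : x ∈ D <;> simp [hx]
    · ext x; by_cases hx : x ∈ D <;> simp [hx]
  have hdec2 : ∀ S ∈ genAlg (Rect ∪ {D}),
      ∃ A ∈ genAlg Rect, ∃ C ∈ genAlg Rect, S ∩ Dᶜ = A ∩ Dᶜ ∧ S ∩ Dᶜᶜ = C ∩ Dᶜᶜ := by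
    intro S hS
    obtain ⟨A, hA, C, hC, h1, h2⟩ := hdec1 S hS
    exact ⟨C, hC, A, hA, h2, by rw [compl_compl]; exact h1⟩
  refine ⟨fun S => outM (genAlg Rect) ω₀ (S ∩ D) + innM (genAlg Rect) ω₀ (S ∩ Dᶜ),
    fun S => outM (genAlg Rect) ω₀ (S ∩ Dᶜ) + innM (genAlg Rect) ω₀ (S ∩ Dᶜᶜ),
    extend_isFAP hA1 hω₀ D _ hdec1,
    extend_isFAP hA1 hω₀ Dᶜ _ hdec2,
    fun S hS => restrict hA1 hω₀ D hS,
    fun S hS => restrict hA1 hω₀ Dᶜ hS, ?_⟩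
  have hgap' : innM (genAlg Rect) ω₀ D < outM (genAlg Rect) ω₀ D := hgap
  simp only [Set.inter_self, Set.inter_compl_self, compl_compl]
  rw [out_empty hA1 hω₀, inn_empty hA1 hω₀]
  intro h
  rw [add_zero, zero_add] at h
  exact absurd h (ne_of_gt hgap')
end

section
/- Let X, Y be finite sets, R ⊆ X × Y, and ε > 0. Suppose there exist finite unions of rectangles P ⊆ R ⊆ Q with |Q \ P| ≤ ε·|X|·|Y|. Then there exist partitions P₁,…,Pₙ of X and Q₁,…,Q_m of Y such that the sum of |P_i|·|Q_j| over all pairs (i,j) for which P_i × Q_j is not R-homogeneous is at most ε·|X|·|Y|. -/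
open scoped Classical

/-- A finite union of rectangles (as a `Finset`). -/
def IsRectUnionF {X Y : Type*} [DecidableEq X] [DecidableEq Y] (P : Finset (X × Y)) : Prop :=
  ∃ (n : ℕ) (A : Fin n → Finset X) (B : Fin n → Finset Y),
    P = Finset.univ.biUnion fun i => A i ×ˢ B i

theorem stmt_4 {X Y : Type*} [Fintype X] [Fintype Y] [DecidableEq X] [DecidableEq Y]
    (R : Finset (X × Y)) (ε : ℝ) (hε : 0 < ε)
    (P Q : Finset (X × Y)) (hP : IsRectUnionF P) (hQ : IsRectUnionF Q)
    (hPR : P ⊆ R) (hRQ : R ⊆ Q)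
    (hgap : ((Q \ P).card : ℝ) ≤ ε * Fintype.card X * Fintype.card Y) :
    ∃ (n m : ℕ) (Pp : Fin n → Finset X) (Qq : Fin m → Finset Y),
      (∀ x : X, ∃! i, x ∈ Pp i) ∧ (∀ y : Y, ∃! j, y ∈ Qq j) ∧
      (∑ i : Fin n, ∑ j : Fin m,
          (if ¬((Pp i ×ˢ Qq j : Finset (X × Y)) ⊆ R ∨ Disjoint (Pp i ×ˢ Qq j) R)
            then ((Pp i).card * (Qq j).card : ℝ) else 0))
        ≤ ε * Fintype.card X * Fintype.card Y := by
  classical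
  obtain ⟨n1, A1, B1, hPe⟩ := hP
  obtain ⟨n2, A2, B2, hQe⟩ := hQ
  set ι := (Fin n1 ⊕ Fin n2) with hι
  set A : ι → Finset X := Sum.elim A1 A2 with hA
  set B : ι → Finset Y := Sum.elim B1 B2 with hB
  set C : (ι → Bool) → Finset X :=
    fun f => Finset.univ.filter (fun x => ∀ i, (x ∈ A i ↔ f i = true)) with hC
  set D : (ι → Bool) → Finset Y :=
    fun g => Finset.univ.filter (fun y => ∀ i, (y ∈ B i ↔ g i = true)) with hD
  have hCmem : ∀ (f : ι → Bool) (x : X), x ∈ C f ↔ ∀ i, (x ∈ A i ↔ f i = true) := by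
    intro f x; simp [hC]
  have hDmem : ∀ (g : ι → Bool) (y : Y), y ∈ D g ↔ ∀ i, (y ∈ B i ↔ g i = true) := by
    intro g y; simp [hD]
  set N := Fintype.card (ι → Bool) with hN
  set e : Fin N ≃ (ι → Bool) := (Fintype.equivFin (ι → Bool)).symm with he
  refine ⟨N, N, fun k => C (e k), fun k => D (e k), ?_, ?_, ?_⟩
  · intro x
    refine ⟨e.symm (fun i => decide (x ∈ A i)), ?_, ?_⟩
    · show x ∈ C (e (e.symm fun i => decide (x ∈ A i)))
      rw [Equiv.apply_symm_apply, hCmem]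
      intro i; simp
    · intro k hk
      rw [hCmem] at hk
      have : e k = fun i => decide (x ∈ A i) := by
        funext i
        have h := hk i
        by_cases hx : x ∈ A i <;> simp [hx] at h ⊢ <;> exact h
      exact e.injective (by rw [this, Equiv.apply_symm_apply])
  · intro y
    refine ⟨e.symm (fun i => decide (y ∈ B i)), ?_, ?_⟩
    · show y ∈ D (e (e.symm fun i => decide (y ∈ B i)))
      rw [Equiv.apply_symm_apply, hDmem]
      intro i; simp
    · intro k hk
      rw [hDmem] at hk
      have : e k = fun i => decide (y ∈ B i) := by
        funext i
        have h := hk i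
        by_cases hy : y ∈ B i <;> simp [hy] at h ⊢ <;> exact h
      exact e.injective (by rw [this, Equiv.apply_symm_apply])
  · -- the counting bound
    have hbad : ∀ f g, ¬((C f ×ˢ D g : Finset (X × Y)) ⊆ R ∨ Disjoint (C f ×ˢ D g) R) →
        (C f ×ˢ D g : Finset (X × Y)) ⊆ Q \ P := by
      intro f g hfg
      push_neg at hfg
      obtain ⟨h1, h2⟩ := hfg
      obtain ⟨⟨x0, y0⟩, hmem, hR0⟩ := Finset.not_disjoint_iff.mp h2
      rw [Finset.mem_product] at hmem
      have hQ0 : (x0, y0) ∈ Q := hRQ hR0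
      rw [hQe, Finset.mem_biUnion] at hQ0
      obtain ⟨j, -, hj⟩ := hQ0
      rw [Finset.mem_product] at hj
      have hfj : f (Sum.inr j) = true := ((hCmem f x0).mp hmem.1 (Sum.inr j)).mp hj.1
      have hgj : g (Sum.inr j) = true := ((hDmem g y0).mp hmem.2 (Sum.inr j)).mp hj.2
      intro ⟨x, y⟩ hxy
      rw [Finset.mem_product] at hxy
      have hxQ : (x, y) ∈ Q := by
        rw [hQe, Finset.mem_biUnion]
        exact ⟨j, Finset.mem_univ _, Finset.mem_product.mpr
          ⟨((hCmem f x).mp hxy.1 (Sum.inr j)).mpr hfj,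
           ((hDmem g y).mp hxy.2 (Sum.inr j)).mpr hgj⟩⟩
      rw [Finset.mem_sdiff]
      refine ⟨hxQ, fun hxP => ?_⟩
      -- if any point of the product is in P, the whole product is in P ⊆ R, contradiction
      rw [hPe, Finset.mem_biUnion] at hxP
      obtain ⟨i, -, hi⟩ := hxP
      rw [Finset.mem_product] at hi
      have hfi : f (Sum.inl i) = true := ((hCmem f x).mp hxy.1 (Sum.inl i)).mp hi.1
      have hgi : g (Sum.inl i) = true := ((hDmem g y).mp hxy.2 (Sum.inl i)).mp hi.2
      apply h1
      intro ⟨x', y'⟩ hxy'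
      rw [Finset.mem_product] at hxy'
      apply hPR
      rw [hPe, Finset.mem_biUnion]
      exact ⟨i, Finset.mem_univ _, Finset.mem_product.mpr
        ⟨((hCmem f x').mp hxy'.1 (Sum.inl i)).mpr hfi,
         ((hDmem g y').mp hxy'.2 (Sum.inl i)).mpr hgi⟩⟩
    -- disjointness of distinct atom products
    have hdisj : ∀ p q : Fin N × Fin N, p ≠ q →
        Disjoint (C (e p.1) ×ˢ D (e p.2) : Finset (X × Y)) (C (e q.1) ×ˢ D (e q.2)) := by
      intro p q hpq
      rw [Finset.disjoint_left]
      rintro ⟨x, y⟩ hp hq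
      rw [Finset.mem_product] at hp hq
      apply hpq
      have h1 : e p.1 = e q.1 := by
        funext i
        have a := (hCmem _ x).mp hp.1 i
        have b := (hCmem _ x).mp hq.1 i
        cases h : e q.1 i
        · cases h' : e p.1 i
          · rfl
          · exact absurd (b.mp (a.mpr h')) (by simp [h])
        · exact a.mp (b.mpr h)
      have h2 : e p.2 = e q.2 := by
        funext i
        have a := (hDmem _ y).mp hp.2 i
        have b := (hDmem _ y).mp hq.2 i
        cases h : e q.2 i
        · cases h' : e p.2 i
          · rfl
          · exact absurd (b.mp (a.mpr h')) (by simp [h])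
        · exact a.mp (b.mpr h)
      exact Prod.ext (e.injective h1) (e.injective h2)
    set T : Finset (Fin N × Fin N) := Finset.univ.filter
      (fun p => ¬((C (e p.1) ×ˢ D (e p.2) : Finset (X × Y)) ⊆ R ∨
        Disjoint (C (e p.1) ×ˢ D (e p.2)) R)) with hT
    have step1 : (∑ i : Fin N, ∑ j : Fin N,
        (if ¬((C (e i) ×ˢ D (e j) : Finset (X × Y)) ⊆ R ∨ Disjoint (C (e i) ×ˢ D (e j)) R)
          then ((C (e i)).card * (D (e j)).card : ℝ) else 0))
        = ∑ p ∈ T, ((C (e p.1) ×ˢ D (e p.2) : Finset (X × Y)).card : ℝ) := by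
      rw [← Finset.sum_product']
      rw [hT, Finset.sum_filter]
      apply Finset.sum_congr rfl
      intro p _
      by_cases h : ¬((C (e p.1) ×ˢ D (e p.2) : Finset (X × Y)) ⊆ R ∨
          Disjoint (C (e p.1) ×ˢ D (e p.2)) R)
      · simp [h, Finset.card_product]
      · simp [h]
    have step2 : ∑ p ∈ T, ((C (e p.1) ×ˢ D (e p.2) : Finset (X × Y)).card : ℝ)
        = ((T.biUnion fun p => (C (e p.1) ×ˢ D (e p.2) : Finset (X × Y))).card : ℝ) := by
      rw [Finset.card_biUnion]
      · push_cast; rfl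
      · intro p _ q _ hpq
        exact hdisj p q hpq
    have step3 : (T.biUnion fun p => (C (e p.1) ×ˢ D (e p.2) : Finset (X × Y))) ⊆ Q \ P := by
      apply Finset.biUnion_subset.mpr
      intro p hp
      rw [hT, Finset.mem_filter] at hp
      exact hbad _ _ hp.2
    calc (∑ i : Fin N, ∑ j : Fin N,
        (if ¬((C (e i) ×ˢ D (e j) : Finset (X × Y)) ⊆ R ∨ Disjoint (C (e i) ×ˢ D (e j)) R)
          then ((C (e i)).card * (D (e j)).card : ℝ) else 0))
        = ((T.biUnion fun p => (C (e p.1) ×ˢ D (e p.2) : Finset (X × Y))).card : ℝ) := by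
          rw [step1, step2]
      _ ≤ ((Q \ P).card : ℝ) := by
          exact_mod_cast Finset.card_le_card step3
      _ ≤ ε * Fintype.card X * Fintype.card Y := hgap
end

section
/- Let X, Y be sets, μ and λ finitely additive probability measures on their power sets, R ⊆ X × Y, and ε > 0. Suppose there exist finite unions of rectangles P ⊆ R ⊆ Q such that (μ × λ)(Q) − (μ × λ)(P) < ε. Then there exist finite partitions P₁,…,Pₙ of X and Q₁,…,Q_m of Y into sets lying in the Boolean algebras generated by the sides of the rectangles, such that Σ μ(P_i)·λ(Q_j) < ε, where the sum is over all pairs (i,j) such that (P_i, Q_j) is not R-homogeneous. -/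
open scoped Classical

/-!
The atoms of the finite Boolean algebras generated by the sides of the rectangles partition `X`
and `Y`, and the product of two atoms is homogeneous for every union of rectangles built from
those sides, in particular for `P` and `Q`. Hence, for any finitely additive `ω` extending
`μ × λ`, `ω Q - ω P` is the total mass of the atom rectangles lying in `Q` but not in `P`, and
these include every rectangle that is not `R`-homogeneous.

It remains to find one such `ω` defined on all subsets of `X × Y`. For a finite family `S` of
subsets of `X`, integrate the section measures `λ (E_x)` against `μ` by a Riemann sum over the
atoms of `S`, sampling each atom at an arbitrary point; this is finitely additive in `E`. Take
the limit along an ultrafilter finer than `atTop` on finite families: as soon as `A ∈ S` the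
Riemann sum of `A × B` is exactly `μ A * λ B`.
-/

open Set Filter Topology MeasureTheory Finset

section

variable {X Y Z : Type*}

lemma IsSetAlg.isSetAlgebra {B : Set (Set X)} (h : IsSetAlg B) : IsSetAlgebra B :=
  ⟨h.1, fun A hA => h.2.1 A hA, fun A C hA hC => h.2.2 A hA C hC⟩

lemma generateSetAlgebra_subset_genAlg (S : Set (Set X)) : generateSetAlgebra S ⊆ genAlg S :=
  fun _ hA => mem_sInter.2 fun _ ⟨hB, hSB⟩ =>
    hB.isSetAlgebra.generateSetAlgebra_subset hSB hA

def IsHomogeneous (c V : Set Z) : Prop := c ⊆ V ∨ Disjoint c V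

lemma IsHomogeneous.prod {a A : Set X} {b B : Set Y} (ha : IsHomogeneous a A)
    (hb : IsHomogeneous b B) : IsHomogeneous (a ×ˢ b) (A ×ˢ B) := by
  rcases ha with ha | ha
  · rcases hb with hb | hb
    · exact Or.inl (prod_mono ha hb)
    · exact Or.inr (disjoint_prod.2 (Or.inr hb))
  · exact Or.inr (disjoint_prod.2 (Or.inl ha))

lemma IsHomogeneous.iUnion {ι : Type*} {c : Set Z} {V : ι → Set Z}
    (h : ∀ k, IsHomogeneous c (V k)) : IsHomogeneous c (⋃ k, V k) := by
  by_cases hsub : ∃ k, c ⊆ V k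
  · obtain ⟨k, hk⟩ := hsub
    exact Or.inl (subset_iUnion_of_subset k hk)
  · push Not at hsub
    exact Or.inr (disjoint_iUnion_right.2 fun k => (h k).resolve_left (hsub k))

namespace IsFAP

variable {μ : Set Z → ℝ}

lemma map_empty (hμ : IsFAP μ) : μ ∅ = 0 := by
  have := hμ.2.2 ∅ ∅ (disjoint_empty ∅)
  rw [union_empty] at this
  linarith

lemma le_one (hμ : IsFAP μ) (A : Set Z) : μ A ≤ 1 := by
  have := hμ.2.2 A Aᶜ disjoint_compl_right
  rw [union_compl_self, hμ.1] at this
  linarith [hμ.2.1 Aᶜ]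

lemma map {l : Set Y → ℝ} (hl : IsFAP l) (f : Y → Z) : IsFAP fun E => l (f ⁻¹' E) :=
  ⟨hl.1, fun _ => hl.2.1 _, fun _ _ h => hl.2.2 _ _ (h.preimage f)⟩

lemma map_biUnion (hμ : IsFAP μ) {ι : Type*} (t : Finset ι) {c : ι → Set Z}
    (hc : (t : Set ι).PairwiseDisjoint c) : μ (⋃ i ∈ t, c i) = ∑ i ∈ t, μ (c i) := by
  induction t using Finset.induction_on with
  | empty => simp [hμ.map_empty]
  | insert a t ha ih =>
    rw [Finset.coe_insert, pairwiseDisjoint_insert_of_notMem (by exact_mod_cast ha)] at hc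
    rw [Finset.set_biUnion_insert,
      hμ.2.2 (c a) (⋃ i ∈ t, c i) (disjoint_iUnion₂_right.2 hc.2),
      Finset.sum_insert ha, ih hc.1]

lemma sum_inter_of_partition (hμ : IsFAP μ) {ι : Type*} [Fintype ι] {c : ι → Set Z}
    (hc : ∀ z, ∃! i, z ∈ c i) (A : Set Z) : ∑ i, μ (c i ∩ A) = μ A := by
  have hdisj : ((Finset.univ : Finset ι) : Set ι).PairwiseDisjoint fun i => c i ∩ A :=
    fun i _ j _ hij => disjoint_left.2 fun z hi hj => hij ((hc z).unique hi.1 hj.1)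
  rw [← hμ.map_biUnion _ hdisj]
  congr 1
  ext z
  simp only [Finset.mem_univ, iUnion_true, mem_iUnion, mem_inter_iff]
  exact ⟨fun ⟨_, _, hz⟩ => hz, fun hz => ⟨_, (hc z).exists.choose_spec, hz⟩⟩

lemma eq_sum_of_partition (hμ : IsFAP μ) {ι : Type*} [Fintype ι] {c : ι → Set Z}
    (hc : ∀ z, ∃! i, z ∈ c i) {V : Set Z} (hV : ∀ i, IsHomogeneous (c i) V) :
    μ V = ∑ i with c i ⊆ V, μ (c i) := by
  rw [← hμ.sum_inter_of_partition hc V, Finset.sum_filter]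
  refine Finset.sum_congr rfl fun i _ => ?_
  split_ifs with hsub
  · rw [inter_eq_left.2 hsub]
  · rw [((hV i).resolve_left hsub).inter_eq, hμ.map_empty]

lemma sum_not_isHomogeneous_le (hμ : IsFAP μ) {ι : Type*} [Fintype ι] {c : ι → Set Z}
    (hc : ∀ z, ∃! i, z ∈ c i) {P R Q : Set Z} (hPR : P ⊆ R) (hRQ : R ⊆ Q)
    (hP : ∀ i, IsHomogeneous (c i) P) (hQ : ∀ i, IsHomogeneous (c i) Q) :
    ∑ i with ¬IsHomogeneous (c i) R, μ (c i) ≤ μ Q - μ P := by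
  have hPQ : univ.filter (fun i => c i ⊆ P) ⊆ univ.filter (fun i => c i ⊆ Q) := by
    intro i
    simp only [Finset.mem_filter, Finset.mem_univ, true_and]
    exact fun h => h.trans (hPR.trans hRQ)
  have hsplit : univ.filter (fun i => ¬IsHomogeneous (c i) R) ⊆
      univ.filter (fun i => c i ⊆ Q) \ univ.filter (fun i => c i ⊆ P) := by
    intro i hi
    simp only [IsHomogeneous, not_or, Finset.mem_filter, Finset.mem_univ, true_and,
      Finset.mem_sdiff] at hi ⊢
    obtain ⟨z, hzc, hzR⟩ := not_disjoint_iff.1 hi.2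
    exact ⟨(hQ i).resolve_right (not_disjoint_iff.2 ⟨z, hzc, hRQ hzR⟩),
      fun hsub => hi.1 (hsub.trans hPR)⟩
  rw [hμ.eq_sum_of_partition hc hQ, hμ.eq_sum_of_partition hc hP, ← Finset.sum_sdiff hPQ,
    add_sub_cancel_right]
  exact Finset.sum_le_sum_of_subset_of_nonneg hsplit fun i _ _ => hμ.2.1 _

end IsFAP

lemma existsUnique_mem_prod {ι κ : Type*} {a : ι → Set X} {b : κ → Set Y}
    (ha : ∀ x, ∃! i, x ∈ a i) (hb : ∀ y, ∃! j, y ∈ b j) (z : X × Y) :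
    ∃! p : ι × κ, z ∈ a p.1 ×ˢ b p.2 := by
  obtain ⟨i, hi, hi'⟩ := ha z.1
  obtain ⟨j, hj, hj'⟩ := hb z.2
  exact ⟨(i, j), ⟨hi, hj⟩, fun p hp => Prod.ext (hi' _ hp.1) (hj' _ hp.2)⟩

def atomOf {ι : Type*} (C : ι → Set X) (s : ι → Bool) : Set X :=
  ⋂ i, if s i then C i else (C i)ᶜ

section Atoms

variable {ι : Type*} {C : ι → Set X}

lemma mem_atomOf_iff {s : ι → Bool} {x : X} :
    x ∈ atomOf C s ↔ (fun i => decide (x ∈ C i)) = s := by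
  simp only [atomOf, mem_iInter, funext_iff]
  refine forall_congr' fun i => ?_
  cases s i <;> simp

lemma existsUnique_mem_atomOf (C : ι → Set X) (x : X) : ∃! s, x ∈ atomOf C s := by
  simp only [mem_atomOf_iff]
  exact ⟨_, rfl, fun _ => Eq.symm⟩

lemma isHomogeneous_atomOf (s : ι → Bool) (i : ι) : IsHomogeneous (atomOf C s) (C i) := by
  cases hs : s i
  · exact Or.inr (disjoint_left.2 fun x hx hxC => by simp [← mem_atomOf_iff.1 hx, hxC] at hs)
  · exact Or.inl fun x hx => by simpa [← mem_atomOf_iff.1 hx] using hs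

lemma MeasureTheory.IsSetAlgebra.atomOf_mem [Fintype ι] {𝒜 : Set (Set X)}
    (h𝒜 : IsSetAlgebra 𝒜) (hC : ∀ i, C i ∈ 𝒜) (s : ι → Bool) : atomOf C s ∈ 𝒜 := by
  have := h𝒜.biInter_mem (s := fun i => if s i then C i else (C i)ᶜ) univ fun i _ => by
    split_ifs
    exacts [hC i, h𝒜.compl_mem (hC i)]
  simpa only [atomOf, Finset.mem_univ, iInter_true] using this

lemma atomOf_mem_genAlg [Fintype ι] {S : Set (Set X)} (hC : ∀ i, C i ∈ S) (s : ι → Bool) :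
    atomOf C s ∈ genAlg S :=
  generateSetAlgebra_subset_genAlg S <|
    isSetAlgebra_generateSetAlgebra.atomOf_mem (fun i => self_subset_generateSetAlgebra (hC i)) s

end Atoms

noncomputable def sampleAt (f : X → ℝ) (a : Set X) : ℝ :=
  if h : a.Nonempty then f h.some else 0

noncomputable def riemannSum {ι : Type*} [Fintype ι] (μ : Set X → ℝ) (C : ι → Set X)
    (f : X → ℝ) : ℝ :=
  ∑ s, μ (atomOf C s) * sampleAt f (atomOf C s)

section RiemannSum

variable {ι : Type*} [Fintype ι] {μ : Set X → ℝ} {C : ι → Set X}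

lemma IsFAP.mul_sampleAt_of_forall_eq (hμ : IsFAP μ) {a : Set X} {f : X → ℝ} {c : ℝ}
    (hf : ∀ x ∈ a, f x = c) : μ a * sampleAt f a = μ a * c := by
  rcases a.eq_empty_or_nonempty with rfl | ha
  · simp [hμ.map_empty]
  · rw [sampleAt, dif_pos ha, hf _ ha.some_mem]

lemma riemannSum_add (f g : X → ℝ) :
    riemannSum μ C (f + g) = riemannSum μ C f + riemannSum μ C g := by
  simp only [riemannSum, ← Finset.sum_add_distrib, ← mul_add, sampleAt]
  congr! 2
  split_ifs <;> simp

lemma IsFAP.riemannSum_nonneg (hμ : IsFAP μ) {f : X → ℝ} (hf : ∀ x, 0 ≤ f x) :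
    0 ≤ riemannSum μ C f :=
  Finset.sum_nonneg fun _ _ => mul_nonneg (hμ.2.1 _) <| by
    unfold sampleAt
    split_ifs
    exacts [hf _, le_rfl]

lemma IsFAP.riemannSum_const (hμ : IsFAP μ) (c : ℝ) : riemannSum μ C (fun _ => c) = c := by
  have hterm : ∀ s, μ (atomOf C s) * sampleAt (fun _ => c) (atomOf C s) =
      c * μ (atomOf C s ∩ Set.univ) := fun s => by
    rw [hμ.mul_sampleAt_of_forall_eq fun _ _ => rfl, inter_univ, mul_comm]
  simp only [riemannSum, hterm, ← Finset.mul_sum,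
    hμ.sum_inter_of_partition (existsUnique_mem_atomOf C), hμ.1, mul_one]

lemma IsFAP.riemannSum_indicator (hμ : IsFAP μ) (i : ι) (c : ℝ) :
    riemannSum μ C ((C i).indicator fun _ => c) = c * μ (C i) := by
  have hterm : ∀ s, μ (atomOf C s) * sampleAt ((C i).indicator fun _ => c) (atomOf C s) =
      c * μ (atomOf C s ∩ C i) := fun s => by
    rcases isHomogeneous_atomOf s i with hsub | hdisj
    · rw [hμ.mul_sampleAt_of_forall_eq fun x hx => indicator_of_mem (hsub hx) _,
        inter_eq_left.2 hsub, mul_comm]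
    · rw [hμ.mul_sampleAt_of_forall_eq fun x hx => indicator_of_notMem
        (disjoint_left.1 hdisj hx) _, hdisj.inter_eq, hμ.map_empty, mul_zero, mul_zero]
  simp only [riemannSum, hterm, ← Finset.mul_sum,
    hμ.sum_inter_of_partition (existsUnique_mem_atomOf C)]

lemma IsFAP.riemannSum_mixture (hμ : IsFAP μ) (C : ι → Set X) {ν : X → Set Z → ℝ}
    (hν : ∀ x, IsFAP (ν x)) : IsFAP fun E => riemannSum μ C fun x => ν x E := by
  refine ⟨?_, fun E => hμ.riemannSum_nonneg fun x => (hν x).2.1 E, fun E F hEF => ?_⟩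
  · simp only [fun x => (hν x).1, hμ.riemannSum_const]
  · rw [← riemannSum_add]
    exact congrArg (riemannSum μ C) (funext fun x => (hν x).2.2 E F hEF)

end RiemannSum

lemma tendsto_limUnder_of_isCompact {α T : Type*} [TopologicalSpace T] [Nonempty T]
    (U : Ultrafilter α) {K : Set T} (hK : IsCompact K) {g : α → T} (hg : ∀ a, g a ∈ K) :
    Tendsto g U (𝓝 (limUnder (U : Filter α) g)) := by
  obtain ⟨t, -, ht⟩ := hK.ultrafilter_le_nhds' (U.map g)
    (by
      rw [Ultrafilter.mem_map, preimage_eq_univ_iff.2 (range_subset_iff.2 hg)]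
      exact univ_mem)
  exact tendsto_nhds_limUnder ⟨t, ht⟩

lemma isFAP_limUnder {α : Type*} (U : Ultrafilter α) {ν : α → Set Z → ℝ}
    (hν : ∀ a, IsFAP (ν a)) : IsFAP fun E => limUnder (U : Filter α) fun a => ν a E := by
  have hlim : ∀ E, Tendsto (fun a => ν a E) U (𝓝 (limUnder (U : Filter α) (ν · E))) :=
    fun E => tendsto_limUnder_of_isCompact U isCompact_Icc
      fun a => ⟨(hν a).2.1 E, (hν a).le_one E⟩
  refine ⟨?_, fun E => ge_of_tendsto' (hlim E) fun a => (hν a).2.1 E, fun E F hEF => ?_⟩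
  · simp only [fun a => (hν a).1]
    exact tendsto_const_nhds.limUnder_eq
  · simp only [fun a => (hν a).2.2 E F hEF]
    exact ((hlim E).add (hlim F)).limUnder_eq

theorem IsFAP.exists_prod {μ : Set X → ℝ} {l : Set Y → ℝ} (hμ : IsFAP μ) (hl : IsFAP l) :
    ∃ ω : Set (X × Y) → ℝ, IsFAP ω ∧ ∀ A B, ω (A ×ˢ B) = μ A * l B := by
  let U := Ultrafilter.of (atTop : Filter (Finset (Set X)))
  let ν : Finset (Set X) → Set (X × Y) → ℝ := fun S E =>
    riemannSum μ (fun A : S => (A : Set X)) fun x => l (Prod.mk x ⁻¹' E)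
  refine ⟨_, isFAP_limUnder U fun S =>
    hμ.riemannSum_mixture (fun A : S => (A : Set X)) fun x => hl.map (Prod.mk x), fun A B => ?_⟩
  have hsection : (fun x => l (Prod.mk x ⁻¹' A ×ˢ B)) = A.indicator fun _ => l B := by
    funext x
    by_cases hx : x ∈ A
    · simp [hx]
    · simp [hx, hl.map_empty]
  have hrect : ∀ S, A ∈ S → ν S (A ×ˢ B) = μ A * l B := fun S hA => by
    simp only [ν, hsection]
    rw [hμ.riemannSum_indicator (C := fun A : S => (A : Set X)) ⟨A, hA⟩, mul_comm]
  have hev : ∀ᶠ S in (U : Filter _), ν S (A ×ˢ B) = μ A * l B :=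
    Ultrafilter.of_le _ <|
      eventually_atTop.2 ⟨{A}, fun S hS => hrect S (singleton_subset_iff.1 hS)⟩
  exact (tendsto_const_nhds.congr' (hev.mono fun _ h => h.symm)).limUnder_eq

end

theorem stmt_5_general {X Y : Type*} (μ : Set X → ℝ) (l : Set Y → ℝ)
    (hμ : IsFAP μ) (hl : IsFAP l) (R : Set (X × Y)) (ε : ℝ)
    (nP nQ : ℕ) (AP : Fin nP → Set X) (BP : Fin nP → Set Y)
    (AQ : Fin nQ → Set X) (BQ : Fin nQ → Set Y)
    (P Q : Set (X × Y))
    (hPdef : P = ⋃ i, AP i ×ˢ BP i) (hQdef : Q = ⋃ j, AQ j ×ˢ BQ j)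
    (hPR : P ⊆ R) (hRQ : R ⊆ Q)
    (hgap : ∀ ω : Set (X × Y) → ℝ, IsFAP ω →
      (∀ (A : Set X) (B : Set Y), ω (A ×ˢ B) = μ A * l B) → ω Q - ω P < ε) :
    ∃ (n m : ℕ) (Pp : Fin n → Set X) (Qq : Fin m → Set Y),
      (∀ x : X, ∃! i, x ∈ Pp i) ∧ (∀ y : Y, ∃! j, y ∈ Qq j) ∧
      (∀ i, Pp i ∈ genAlg (Set.range AP ∪ Set.range AQ)) ∧
      (∀ j, Qq j ∈ genAlg (Set.range BP ∪ Set.range BQ)) ∧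
      (∑ i : Fin n, ∑ j : Fin m,
          (if ¬(Pp i ×ˢ Qq j ⊆ R ∨ Disjoint (Pp i ×ˢ Qq j) R)
            then μ (Pp i) * l (Qq j) else 0)) < ε := by
  obtain ⟨ω, hω, hωprod⟩ := hμ.exists_prod hl
  let C := Sum.elim AP AQ
  let D := Sum.elim BP BQ
  let e := Fintype.equivFin (Fin nP ⊕ Fin nQ → Bool)
  let Pp := fun i => atomOf C (e.symm i)
  let Qq := fun j => atomOf D (e.symm j)
  have hPp : ∀ x, ∃! i, x ∈ Pp i :=
    fun x => e.existsUnique_congr_left.1 (existsUnique_mem_atomOf C x)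
  have hQq : ∀ y, ∃! j, y ∈ Qq j :=
    fun y => e.existsUnique_congr_left.1 (existsUnique_mem_atomOf D y)
  have hhom : ∀ (N : ℕ) (f : Fin N → Fin nP ⊕ Fin nQ) (p : Fin _ × Fin _),
      IsHomogeneous (Pp p.1 ×ˢ Qq p.2) (⋃ k, C (f k) ×ˢ D (f k)) := fun _ _ _ =>
    IsHomogeneous.iUnion fun _ => (isHomogeneous_atomOf _ _).prod (isHomogeneous_atomOf _ _)
  refine ⟨_, _, Pp, Qq, hPp, hQq, fun i => atomOf_mem_genAlg (fun k => by cases k <;> simp [C]) _,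
    fun j => atomOf_mem_genAlg (fun k => by cases k <;> simp [D]) _, ?_⟩
  calc _ = ∑ p : Fin _ × Fin _ with ¬IsHomogeneous (Pp p.1 ×ˢ Qq p.2) R,
        ω (Pp p.1 ×ˢ Qq p.2) := by
        rw [← Finset.sum_product', Finset.sum_filter]
        simp only [IsHomogeneous, hωprod, Finset.univ_product_univ]
    _ ≤ ω Q - ω P := hω.sum_not_isHomogeneous_le (existsUnique_mem_prod hPp hQq) hPR hRQ
        (hPdef ▸ hhom nP Sum.inl) (hQdef ▸ hhom nQ Sum.inr)
    _ < ε := hgap ω hω hωprod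

theorem stmt_5 {X Y : Type*} (μ : Set X → ℝ) (l : Set Y → ℝ)
    (hμ : IsFAP μ) (hl : IsFAP l) (R : Set (X × Y)) (ε : ℝ) (hε : 0 < ε)
    (nP nQ : ℕ) (AP : Fin nP → Set X) (BP : Fin nP → Set Y)
    (AQ : Fin nQ → Set X) (BQ : Fin nQ → Set Y)
    (P Q : Set (X × Y))
    (hPdef : P = ⋃ i, AP i ×ˢ BP i) (hQdef : Q = ⋃ j, AQ j ×ˢ BQ j)
    (hPR : P ⊆ R) (hRQ : R ⊆ Q)
    (hgap : ∀ ω : Set (X × Y) → ℝ, IsFAP ω →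
      (∀ (A : Set X) (B : Set Y), ω (A ×ˢ B) = μ A * l B) → ω Q - ω P < ε) :
    ∃ (n m : ℕ) (Pp : Fin n → Set X) (Qq : Fin m → Set Y),
      (∀ x : X, ∃! i, x ∈ Pp i) ∧ (∀ y : Y, ∃! j, y ∈ Qq j) ∧
      (∀ i, Pp i ∈ genAlg (Set.range AP ∪ Set.range AQ)) ∧
      (∀ j, Qq j ∈ genAlg (Set.range BP ∪ Set.range BQ)) ∧
      (∑ i : Fin n, ∑ j : Fin m,
          (if ¬(Pp i ×ˢ Qq j ⊆ R ∨ Disjoint (Pp i ×ˢ Qq j) R)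
            then μ (Pp i) * l (Qq j) else 0)) < ε :=
  stmt_5_general μ l hμ hl R ε nP nQ AP BP AQ BQ P Q hPdef hQdef hPR hRQ hgap
end

section
/- Fix n ≥ 2. Let X₁,…,Xₙ be sets with finitely additive probability measures μ₁,…,μₙ on their power sets, R ⊆ X₁ × ⋯ × Xₙ, and ε > 0. Suppose that for inclusion of R between finite unions of boxes (products of n sets) the product-measure gap can be made < ε, i.e. there exist finite unions of boxes P ⊆ R ⊆ Q with (μ₁ × ⋯ × μₙ)(Q \ P) < ε. Then for each i there is a finite partition P(i,1),…,P(i,m(i)) of X_i such that Σ μ₁(P(1,i₁))⋯μₙ(P(n,iₙ)) < ε, the sum running over all tuples (i₁,…,iₙ) for which the box P(1,i₁) × ⋯ × P(n,iₙ) is not R-homogeneous. -/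
open scoped Classical

/-- A finite union of boxes in a product of `n` sets. -/
def IsBoxUnion {n : ℕ} {X : Fin n → Type*} (P : Set (∀ i, X i)) : Prop :=
  ∃ (m : ℕ) (A : Fin m → ∀ i, Set (X i)), P = ⋃ j, Set.pi Set.univ (A j)

section Aux

variable {X : Type*}

theorem IsFAP.empty' {m : Set X → ℝ} (h : IsFAP m) : m ∅ = 0 := by
  have h2 := h.2.2 ∅ ∅ (by simp)
  simp only [Set.union_empty] at h2
  linarith

theorem IsFAP.mono' {m : Set X → ℝ} (h : IsFAP m) {S T : Set X} (hST : S ⊆ T) :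
    m S ≤ m T := by
  have h2 := h.2.2 S (T \ S) Set.disjoint_sdiff_right
  rw [Set.union_diff_cancel hST] at h2
  have h3 := h.2.1 (T \ S)
  linarith

theorem IsFAP.sum_finset {m : Set X → ℝ} (h : IsFAP m) {ι : Type*} (t : Finset ι)
    (f : ι → Set X) (hd : ∀ i ∈ t, ∀ j ∈ t, i ≠ j → Disjoint (f i) (f j)) :
    m (⋃ i ∈ t, f i) = ∑ i ∈ t, m (f i) := by
  induction t using Finset.induction_on with
  | empty => simpa using h.empty'
  | @insert x s hx ih =>
    rw [Finset.set_biUnion_insert, Finset.sum_insert hx,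
      h.2.2 _ _ (by
        rw [Set.disjoint_iUnion₂_right]
        intro i hi
        exact hd x (Finset.mem_insert_self x s) i (Finset.mem_insert_of_mem hi)
          (fun h' => hx (h' ▸ hi))),
      ih (fun i hi j hj hij =>
        hd i (Finset.mem_insert_of_mem hi) j (Finset.mem_insert_of_mem hj) hij)]

/-- The atom of the finite family `F` determined by the trace `S`. -/
def atomF (F : Finset (Set X)) (S : Finset (Set X)) : Set X :=
  {x | ∀ s ∈ F, (x ∈ s ↔ s ∈ S)}

noncomputable def traceF (F : Finset (Set X)) (x : X) : Finset (Set X) :=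
  F.filter (fun s => x ∈ s)

theorem traceF_mem_powerset (F : Finset (Set X)) (x : X) :
    traceF F x ∈ F.powerset :=
  Finset.mem_powerset.2 (Finset.filter_subset _ _)

theorem mem_atomF_traceF (F : Finset (Set X)) (x : X) : x ∈ atomF F (traceF F x) := by
  intro s hs
  simp [traceF, hs]

theorem atomF_eq_traceF {F S : Finset (Set X)} (hS : S ∈ F.powerset) {x : X}
    (hx : x ∈ atomF F S) : S = traceF F x := by
  ext s
  simp only [traceF, Finset.mem_filter]
  constructor
  · intro hsS
    have hsF := Finset.mem_powerset.1 hS hsS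
    exact ⟨hsF, (hx s hsF).2 hsS⟩
  · rintro ⟨hsF, hxs⟩
    exact (hx s hsF).1 hxs

theorem atomF_disjoint {F S S' : Finset (Set X)} (hS : S ∈ F.powerset)
    (hS' : S' ∈ F.powerset) (hne : S ≠ S') : Disjoint (atomF F S) (atomF F S') := by
  rw [Set.disjoint_left]
  intro x hx hx'
  exact hne ((atomF_eq_traceF hS hx).trans (atomF_eq_traceF hS' hx').symm)

theorem iUnion_atomF (F : Finset (Set X)) :
    ⋃ S ∈ F.powerset, atomF F S = Set.univ := by
  ext x
  simp only [Set.mem_iUnion, Set.mem_univ, iff_true]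
  exact ⟨traceF F x, traceF_mem_powerset F x, mem_atomF_traceF F x⟩

theorem atomF_subset_of_mem {F S : Finset (Set X)} {s : Set X} (hsF : s ∈ F)
    (hsS : s ∈ S) : atomF F S ⊆ s := fun _ hx => (hx s hsF).2 hsS

theorem atomF_disjoint_of_not_mem {F S : Finset (Set X)} {s : Set X} (hsF : s ∈ F)
    (hsS : s ∉ S) : Disjoint (atomF F S) s := by
  rw [Set.disjoint_left]
  intro x hx hxs
  exact hsS ((hx s hsF).1 hxs)

noncomputable def tagF [Nonempty X] (F : Finset (Set X)) (S : Finset (Set X)) : X :=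
  if h : (atomF F S).Nonempty then h.choose else Classical.arbitrary X

theorem tagF_mem [Nonempty X] {F S : Finset (Set X)} (h : (atomF F S).Nonempty) :
    tagF F S ∈ atomF F S := by
  rw [tagF, dif_pos h]
  exact h.choose_spec

theorem sum_atomF_ind [Nonempty X] {m : Set X → ℝ} (hm : IsFAP m) {F : Finset (Set X)}
    {A : Set X} (hA : A ∈ F) :
    ∑ S ∈ F.powerset, m (atomF F S) * (if tagF F S ∈ A then 1 else 0) = m A := by
  have key : ∀ S ∈ F.powerset,
      m (atomF F S) * (if tagF F S ∈ A then 1 else 0) = m (atomF F S ∩ A) := by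
    intro S _
    by_cases hne : (atomF F S).Nonempty
    · have htag := tagF_mem hne
      by_cases hmem : tagF F S ∈ A
      · have hAS : A ∈ S := (htag A hA).1 hmem
        rw [if_pos hmem, mul_one, Set.inter_eq_left.2 (atomF_subset_of_mem hA hAS)]
      · have hAS : A ∉ S := fun h => hmem (atomF_subset_of_mem hA h htag)
        have : atomF F S ∩ A = ∅ :=
          Set.disjoint_iff_inter_eq_empty.1 (atomF_disjoint_of_not_mem hA hAS)
        rw [if_neg hmem, mul_zero, this, hm.empty']
    · rw [Set.not_nonempty_iff_eq_empty] at hne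
      rw [hne, hm.empty', zero_mul, Set.empty_inter, hm.empty']
  rw [Finset.sum_congr rfl key]
  rw [← hm.sum_finset F.powerset (fun S => atomF F S ∩ A) (fun S hS S' hS' hne =>
    ((atomF_disjoint hS hS' hne).mono Set.inter_subset_left Set.inter_subset_left))]
  congr 1
  rw [← Set.iUnion₂_inter, iUnion_atomF, Set.univ_inter]

theorem sum_atomF_univ {m : Set X → ℝ} (hm : IsFAP m) (F : Finset (Set X)) :
    ∑ S ∈ F.powerset, m (atomF F S) = 1 := by
  rw [← hm.sum_finset F.powerset (fun S => atomF F S)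
    (fun S hS S' hS' hne => atomF_disjoint hS hS' hne), iUnion_atomF, hm.1]

end Aux

section Prod

variable {n : ℕ} {X : Fin n → Type*} [∀ i, Nonempty (X i)]

noncomputable def wF (μ : ∀ i, Set (X i) → ℝ) (F : ∀ i, Finset (Set (X i)))
    (T : Set (∀ i, X i)) : ℝ :=
  ∑ g ∈ Fintype.piFinset (fun i => (F i).powerset),
    (∏ i, μ i (atomF (F i) (g i))) * (if (fun i => tagF (F i) (g i)) ∈ T then 1 else 0)

variable {μ : ∀ i, Set (X i) → ℝ} (hμ : ∀ i, IsFAP (μ i))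

include hμ

theorem wF_univ (F : ∀ i, Finset (Set (X i))) : wF μ F Set.univ = 1 := by
  unfold wF
  simp only [Set.mem_univ, if_true, mul_one]
  rw [← Finset.prod_univ_sum (t := fun i => (F i).powerset)
    (f := fun i S => μ i (atomF (F i) S))]
  rw [Finset.prod_eq_one (fun i _ => sum_atomF_univ (hμ i) (F i))]

theorem wF_nonneg (F : ∀ i, Finset (Set (X i))) (T : Set (∀ i, X i)) :
    0 ≤ wF μ F T := by
  apply Finset.sum_nonneg
  intro g _
  apply mul_nonneg (Finset.prod_nonneg fun i _ => (hμ i).2.1 _)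
  split <;> norm_num

theorem wF_le_one (F : ∀ i, Finset (Set (X i))) (T : Set (∀ i, X i)) :
    wF μ F T ≤ 1 := by
  rw [← wF_univ hμ F]
  apply Finset.sum_le_sum
  intro g _
  apply mul_le_mul_of_nonneg_left _ (Finset.prod_nonneg fun i _ => (hμ i).2.1 _)
  simp only [Set.mem_univ, if_true]
  split <;> norm_num

omit hμ in
theorem wF_union (F : ∀ i, Finset (Set (X i))) {T T' : Set (∀ i, X i)}
    (hd : Disjoint T T') : wF μ F (T ∪ T') = wF μ F T + wF μ F T' := by
  unfold wF
  rw [← Finset.sum_add_distrib]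
  apply Finset.sum_congr rfl
  intro g _
  rw [← mul_add]
  congr 1
  by_cases h1 : (fun i => tagF (F i) (g i)) ∈ T
  · have h2 : (fun i => tagF (F i) (g i)) ∉ T' := fun h => Set.disjoint_left.1 hd h1 h
    simp [h1, h2, Set.mem_union]
  · by_cases h2 : (fun i => tagF (F i) (g i)) ∈ T'
    · simp [h1, h2, Set.mem_union]
    · simp [h1, h2, Set.mem_union]

theorem wF_box (F : ∀ i, Finset (Set (X i))) {A : ∀ i, Set (X i)}
    (hA : ∀ i, A i ∈ F i) : wF μ F (Set.pi Set.univ A) = ∏ i, μ i (A i) := by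
  unfold wF
  have hind : ∀ g : ∀ i, Finset (Set (X i)),
      (if (fun i => tagF (F i) (g i)) ∈ Set.pi Set.univ A then (1:ℝ) else 0) =
        ∏ i, (if tagF (F i) (g i) ∈ A i then (1:ℝ) else 0) := by
    intro g
    by_cases h : ∀ i, tagF (F i) (g i) ∈ A i
    · rw [if_pos (Set.mem_univ_pi.2 h), Finset.prod_eq_one fun i _ => if_pos (h i)]
    · push_neg at h
      obtain ⟨i, hi⟩ := h
      rw [if_neg (fun hmem => hi (Set.mem_univ_pi.1 hmem i))]
      exact (Finset.prod_eq_zero (Finset.mem_univ i) (by rw [if_neg hi])).symm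
  calc ∑ g ∈ Fintype.piFinset (fun i => (F i).powerset),
        (∏ i, μ i (atomF (F i) (g i))) * (if (fun i => tagF (F i) (g i)) ∈ Set.pi Set.univ A then (1:ℝ) else 0)
      = ∑ g ∈ Fintype.piFinset (fun i => (F i).powerset),
        ∏ i, (μ i (atomF (F i) (g i)) * (if tagF (F i) (g i) ∈ A i then (1:ℝ) else 0)) := by
        apply Finset.sum_congr rfl
        intro g _
        rw [hind g, Finset.prod_mul_distrib]
    _ = ∏ i, ∑ S ∈ (F i).powerset,
          (μ i (atomF (F i) S) * (if tagF (F i) S ∈ A i then (1:ℝ) else 0)) := by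
        rw [← Finset.prod_univ_sum (t := fun i => (F i).powerset)
          (f := fun i S => μ i (atomF (F i) S) * (if tagF (F i) S ∈ A i then (1:ℝ) else 0))]
    _ = ∏ i, μ i (A i) := by
        exact Finset.prod_congr rfl fun i _ => sum_atomF_ind (hμ i) (hA i)

omit hμ in
theorem exists_prod_fap (hμ : ∀ i, IsFAP (μ i)) :
    ∃ ω : Set (∀ i, X i) → ℝ, IsFAP ω ∧
      ∀ A : ∀ i, Set (X i), ω (Set.pi Set.univ A) = ∏ i, μ i (A i) := by
  classical
  haveI : Nonempty (∀ i, Finset (Set (X i))) := ⟨fun _ => ∅⟩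
  set U : Ultrafilter (∀ i, Finset (Set (X i))) := Ultrafilter.of Filter.atTop with hUdef
  have hU : (U : Filter (∀ i, Finset (Set (X i)))) ≤ Filter.atTop := Ultrafilter.of_le _
  have hlim : ∀ T : Set (∀ i, X i),
      ∃ x, Filter.Tendsto (fun F => wF μ F T) (U : Filter _) (nhds x) := by
    intro T
    obtain ⟨x, -, hx⟩ := (isCompact_Icc (a := (0:ℝ)) (b := 1)).ultrafilter_le_nhds
      (U.map (fun F => wF μ F T)) (by
        refine Filter.le_principal_iff.2 (Filter.mem_map.2 (Filter.univ_mem' ?_))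
        intro F
        exact ⟨wF_nonneg hμ _ T, wF_le_one hμ _ T⟩)
    exact ⟨x, hx⟩
  choose ω hω using hlim
  have hbox : ∀ A : ∀ i, Set (X i), ω (Set.pi Set.univ A) = ∏ i, μ i (A i) := by
    intro A
    have hev : ∀ᶠ F in (Filter.atTop : Filter (∀ i, Finset (Set (X i)))),
        ∀ i, A i ∈ F i := by
      rw [Filter.eventually_atTop]
      refine ⟨fun i => {A i}, fun F hF i => ?_⟩
      exact Finset.singleton_subset_iff.1 (hF i)
    have h2 : Filter.Tendsto (fun F => wF μ F (Set.pi Set.univ A)) (U : Filter _)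
        (nhds (∏ i, μ i (A i))) := by
      apply Filter.Tendsto.congr' _ tendsto_const_nhds
      exact (hev.filter_mono hU).mono fun F hF => (wF_box hμ F hF).symm
    exact tendsto_nhds_unique (hω _) h2
  refine ⟨ω, ⟨?_, ?_, ?_⟩, hbox⟩
  · exact tendsto_nhds_unique (hω _)
      (Filter.Tendsto.congr (fun F => (wF_univ hμ F).symm) tendsto_const_nhds)
  · intro A
    exact ge_of_tendsto' (hω A) (fun F => wF_nonneg hμ F A)
  · intro A C hd
    exact tendsto_nhds_unique (hω _)
      (Filter.Tendsto.congr (fun F => (wF_union F hd).symm) ((hω A).add (hω C)))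

end Prod
theorem stmt_6 {n : ℕ} (hn : 2 ≤ n) {X : Fin n → Type*}
    (μ : ∀ i, Set (X i) → ℝ) (hμ : ∀ i, IsFAP (μ i))
    (R : Set (∀ i, X i)) (ε : ℝ) (hε : 0 < ε)
    (P Q : Set (∀ i, X i)) (hP : IsBoxUnion P) (hQ : IsBoxUnion Q)
    (hPR : P ⊆ R) (hRQ : R ⊆ Q)
    (hgap : ∀ ω : Set (∀ i, X i) → ℝ, IsFAP ω →
      (∀ A : ∀ i, Set (X i), ω (Set.pi Set.univ A) = ∏ i, μ i (A i)) →
      ω (Q \ P) < ε) :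
    ∃ (m : Fin n → ℕ) (Pp : ∀ i, Fin (m i) → Set (X i)),
      (∀ i, ∀ x : X i, ∃! j, x ∈ Pp i j) ∧
      (∑ f : (∀ i, Fin (m i)),
          (if ¬(Set.pi Set.univ (fun i => Pp i (f i)) ⊆ R ∨
                 Disjoint (Set.pi Set.univ (fun i => Pp i (f i))) R)
            then ∏ i, μ i (Pp i (f i)) else 0)) < ε := by
  classical
  haveI hNE : ∀ i, Nonempty (X i) := by
    intro i
    rcases isEmpty_or_nonempty (X i) with h | h
    · exfalso
      have h1 := (hμ i).1
      have h0 := (hμ i).empty'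
      rw [Set.univ_eq_empty_iff.2 h, h0] at h1
      linarith
    · exact h
  obtain ⟨ω, hω, hωbox⟩ := exists_prod_fap hμ
  have hgapω := hgap ω hω hωbox
  obtain ⟨p, a, hPa⟩ := hP
  obtain ⟨q, b, hQb⟩ := hQ
  have hPR' : (⋃ j, Set.pi Set.univ (a j)) ⊆ R := hPa ▸ hPR
  have hQb' : (⋃ k, Set.pi Set.univ (b k)) ⊆ Q := hQb ▸ Set.Subset.rfl
  set G : ∀ i, Finset (Set (X i)) := fun i =>
    (Finset.image (fun j => a j i) Finset.univ) ∪
      (Finset.image (fun k => b k i) Finset.univ) with hG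
  have haG : ∀ j i, a j i ∈ G i := fun j i =>
    Finset.mem_union_left _ (Finset.mem_image_of_mem _ (Finset.mem_univ j))
  have hbG : ∀ k i, b k i ∈ G i := fun k i =>
    Finset.mem_union_right _ (Finset.mem_image_of_mem _ (Finset.mem_univ k))
  set m : Fin n → ℕ := fun i => Fintype.card {S // S ∈ (G i).powerset} with hm
  set e : ∀ i, {S // S ∈ (G i).powerset} ≃ Fin (m i) :=
    fun i => Fintype.equivFin _ with he
  set Pp : ∀ i, Fin (m i) → Set (X i) :=
    fun i j => atomF (G i) ((e i).symm j).1 with hPp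
  refine ⟨m, Pp, ?_, ?_⟩
  · intro i x
    refine ⟨e i ⟨traceF (G i) x, traceF_mem_powerset _ _⟩, ?_, ?_⟩
    · simp only [hPp, Equiv.symm_apply_apply]
      exact mem_atomF_traceF _ _
    · intro j hj
      have hj' : x ∈ atomF (G i) ((e i).symm j).1 := hj
      have h2 : (e i).symm j = ⟨traceF (G i) x, traceF_mem_powerset _ _⟩ :=
        Subtype.ext (atomF_eq_traceF ((e i).symm j).2 hj')
      rw [← h2, Equiv.apply_symm_apply]
  · have hdisj : ∀ f f' : ∀ i, Fin (m i), f ≠ f' →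
        Disjoint (Set.pi Set.univ (fun i => Pp i (f i)))
          (Set.pi Set.univ (fun i => Pp i (f' i))) := by
      intro f f' hne
      obtain ⟨i, hi⟩ := Function.ne_iff.1 hne
      have hSne : ((e i).symm (f i)).1 ≠ ((e i).symm (f' i)).1 := fun h =>
        hi ((e i).symm.injective (Subtype.ext h))
      have hd := atomF_disjoint ((e i).symm (f i)).2 ((e i).symm (f' i)).2 hSne
      rw [Set.disjoint_left]
      intro x hx hx'
      exact Set.disjoint_left.1 hd (hx i (Set.mem_univ i)) (hx' i (Set.mem_univ i))
    have hsubQP : ∀ f : ∀ i, Fin (m i),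
        ¬(Set.pi Set.univ (fun i => Pp i (f i)) ⊆ R ∨
            Disjoint (Set.pi Set.univ (fun i => Pp i (f i))) R) →
        Set.pi Set.univ (fun i => Pp i (f i)) ⊆ Q \ P := by
      intro f hf
      push_neg at hf
      obtain ⟨h1, h2⟩ := hf
      have dich : ∀ (c : ∀ i, Set (X i)), (∀ i, c i ∈ G i) →
          Set.pi Set.univ (fun i => Pp i (f i)) ⊆ Set.pi Set.univ c ∨
            Disjoint (Set.pi Set.univ (fun i => Pp i (f i))) (Set.pi Set.univ c) := by
        intro c hc
        by_cases hall : ∀ i, c i ∈ ((e i).symm (f i)).1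
        · left
          exact Set.pi_mono fun i _ => atomF_subset_of_mem (hc i) (hall i)
        · right
          push_neg at hall
          obtain ⟨i, hi⟩ := hall
          rw [Set.disjoint_left]
          intro x hx hx'
          exact Set.disjoint_left.1 (atomF_disjoint_of_not_mem (hc i) hi)
            (hx i (Set.mem_univ i)) (hx' i (Set.mem_univ i))
      have hdP : Disjoint (Set.pi Set.univ (fun i => Pp i (f i))) P := by
        rw [hPa, Set.disjoint_iUnion_right]
        intro j
        rcases dich (a j) (fun i => haG j i) with hsub | hd
        · exact absurd (hsub.trans ((Set.subset_iUnion _ j).trans hPR')) h1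
        · exact hd
      have hQ' : Set.pi Set.univ (fun i => Pp i (f i)) ⊆ Q := by
        have hnd : ¬ Disjoint (Set.pi Set.univ (fun i => Pp i (f i))) Q := fun h =>
          h2 (h.mono_right hRQ)
        rw [hQb, Set.disjoint_iUnion_right, not_forall] at hnd
        obtain ⟨k, hk⟩ := hnd
        rcases dich (b k) (fun i => hbG k i) with hsub | hd
        · exact hsub.trans ((Set.subset_iUnion _ k).trans hQb')
        · exact absurd hd hk
      exact Set.subset_diff.2 ⟨hQ', hdP⟩
    rw [← Finset.sum_filter]
    set N := Finset.univ.filter (fun f : ∀ i, Fin (m i) =>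
      ¬(Set.pi Set.univ (fun i => Pp i (f i)) ⊆ R ∨
          Disjoint (Set.pi Set.univ (fun i => Pp i (f i))) R)) with hN
    calc ∑ f ∈ N, ∏ i, μ i (Pp i (f i))
        = ∑ f ∈ N, ω (Set.pi Set.univ (fun i => Pp i (f i))) :=
          Finset.sum_congr rfl fun f _ => (hωbox _).symm
      _ = ω (⋃ f ∈ N, Set.pi Set.univ (fun i => Pp i (f i))) :=
          (hω.sum_finset N _ fun f _ f' _ hne => hdisj f f' hne).symm
      _ ≤ ω (Q \ P) := hω.mono' (Set.iUnion₂_subset fun f hf =>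
          hsubQP f (Finset.mem_filter.1 hf).2)
      _ < ε := hgapω
end

section
/- Let F be a set system on a set X of VC dimension at most d, and ε > 0. Then there exists n = n(d, ε) such that: for every finitely additive probability measure μ on the power set of X which is ε/2-approximable by finite averages with respect to F (i.e. there exist points approximating μ on F up to ε/2), there exist points a₁,…,aₙ ∈ X such that |μ(S) − (1/n)|{i : a_i ∈ S}|| ≤ ε for all S ∈ F. -/
/-- `F` shatters the finite set `A`. -/
def Shatters {X : Type*} (F : Set (Set X)) (A : Finset X) : Prop :=
  ∀ B ⊆ A, ∃ S ∈ F, ∀ x ∈ A, (x ∈ B ↔ x ∈ S)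

/-- The VC dimension of `F` is at most `d`. -/
def VCDimLE {X : Type*} (F : Set (Set X)) (d : ℕ) : Prop :=
  ∀ A : Finset X, Shatters F A → A.card ≤ d

/-!
Replicate the given `m` points almost uniformly to a sample of size `2 ^ T q ^ 4`, with `T` so
large that this costs at most `m / (2 ^ T q ^ 4) ≤ ε / 4`, then halve it `T` times down to
`q ^ 4` points. A halving step on `s` pairs `(x_i, y_i)` keeps one point of each pair according
to a sign vector `σ`, which changes the average of `S` by `D_σ / 2s`, where `D_σ` is the signed
sum of the `1_S(x_i) - 1_S(y_i)`. By Sauer–Shelah only `(2s + 1) ^ d` such coefficient vectors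
occur, while the `2k`-th moment of `D_σ` over all `σ` is at most `2 ^ s s ^ k k ^ (2k)`; for
`k = 2d + 2`, Markov's inequality and a union bound give one `σ` with `|D_σ| ≲ s ^ (3/4)` for
all `S` at once. The errors `≈ s ^ (-1/4)` of the successive steps form a geometric series
dominated by `1 / q`.
-/

open Finset

section Moments

variable {ι : Type*} [DecidableEq ι]

lemma two_mul_card_image_le_of_even_card_fiber {α : Type*} [Fintype α] (f : α → ι)
    (hf : ∀ i, Even #{a | f a = i}) : 2 * #(univ.image f) ≤ Fintype.card α := by
  rw [← card_univ, card_eq_sum_card_image f univ, mul_comm, ← smul_eq_mul, ← sum_const]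
  refine sum_le_sum fun i hi => ?_
  obtain ⟨a, -, rfl⟩ := mem_image.1 hi
  obtain ⟨r, hr⟩ := hf (f a)
  have : 0 < #{a' | f a' = f a} := card_pos.2 ⟨a, by simp⟩
  omega

lemma exists_comp_eq_of_card_image_le [Nonempty ι] {α : Type*} [Fintype α] (f : α → ι)
    {k : ℕ} (hk : #(univ.image f) ≤ k) :
    ∃ (g : Fin k → ι) (h : α → Fin k), g ∘ h = f := by
  let e := (univ.image f).equivFin
  refine ⟨fun j => if hj : (j : ℕ) < #(univ.image f) then e.symm ⟨j, hj⟩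
      else Classical.arbitrary ι,
    fun a => Fin.castLE hk (e ⟨f a, mem_image_of_mem f (mem_univ a)⟩), funext fun a => ?_⟩
  simp

variable [Fintype ι]

lemma card_filter_even_card_fiber_le {k : ℕ} (hk : 0 < k) :
    #{f : Fin (2 * k) → ι | ∀ i, Even #{j | f j = i}}
      ≤ Fintype.card ι ^ k * k ^ (2 * k) := by
  calc #{f : Fin (2 * k) → ι | ∀ i, Even #{j | f j = i}}
      ≤ #((univ : Finset ((Fin k → ι) × (Fin (2 * k) → Fin k))).image
          fun gh => gh.1 ∘ gh.2) := by
        refine card_le_card fun f hf => ?_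
        have : Nonempty ι := ⟨f ⟨0, by omega⟩⟩
        have hcard := two_mul_card_image_le_of_even_card_fiber f (mem_filter.1 hf).2
        rw [Fintype.card_fin] at hcard
        obtain ⟨g, h, rfl⟩ := exists_comp_eq_of_card_image_le f (k := k) (by omega)
        exact mem_image_of_mem _ (mem_univ (g, h))
    _ ≤ Fintype.card ι ^ k * k ^ (2 * k) := card_image_le.trans (by simp)

lemma Odd.pow_add_neg_pow_eq_zero {e : ℕ} (he : Odd e) (x : ℝ) : x ^ e + (-x) ^ e = 0 := by
  rw [he.neg_pow, add_neg_cancel]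

lemma Even.pow_add_neg_pow_mem_Icc {e : ℕ} (he : Even e) {x : ℝ} (hx : |x| ≤ 1) :
    x ^ e + (-x) ^ e ∈ Set.Icc (0 : ℝ) 2 := by
  rw [he.neg_pow, ← two_mul, ← he.pow_abs]
  exact ⟨by positivity, by nlinarith [pow_le_one₀ (n := e) (abs_nonneg x) hx]⟩

/-- After expanding the power, a monomial survives the sum over the signs only if every index
occurs in it an even number of times. -/
lemma sum_pow_signed_sum_le (c : ι → ℝ) (hc : ∀ i, |c i| ≤ 1) {k : ℕ} (hk : 0 < k) :
    ∑ σ : ι → Bool, (∑ i, if σ i then c i else -c i) ^ (2 * k)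
      ≤ 2 ^ Fintype.card ι * (Fintype.card ι ^ k * k ^ (2 * k) : ℕ) := by
  have hmonomial : ∀ f : Fin (2 * k) → ι,
      ∑ σ : ι → Bool, ∏ j, (if σ (f j) then c (f j) else -c (f j))
        = ∏ i, (c i ^ #{j | f j = i} + (-c i) ^ #{j | f j = i}) := by
    intro f
    calc ∑ σ : ι → Bool, ∏ j, (if σ (f j) then c (f j) else -c (f j))
        = ∑ σ : ι → Bool, ∏ i, (if σ i then c i else -c i) ^ #{j | f j = i} := by
          refine sum_congr rfl fun σ _ => ?_
          rw [← prod_fiberwise univ f]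
          refine prod_congr rfl fun i _ => ?_
          rw [prod_congr rfl fun j hj => by rw [(mem_filter.1 hj).2], prod_const]
      _ = ∏ i, ∑ b : Bool, (if b then c i else -c i) ^ #{j | f j = i} :=
          (Fintype.prod_sum fun i (b : Bool) => (if b then c i else -c i) ^ #{j | f j = i}).symm
      _ = _ := by simp
  calc ∑ σ : ι → Bool, (∑ i, if σ i then c i else -c i) ^ (2 * k)
      = ∑ f : Fin (2 * k) → ι, ∏ i, (c i ^ #{j | f j = i} + (-c i) ^ #{j | f j = i}) := by
        simp_rw [Fintype.sum_pow, ← hmonomial]; exact sum_comm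
    _ ≤ ∑ f : Fin (2 * k) → ι,
          if ∀ i, Even #{j | f j = i} then (2 : ℝ) ^ Fintype.card ι else 0 := by
        refine sum_le_sum fun f _ => ?_
        split_ifs with heven
        · calc ∏ i, (c i ^ #{j | f j = i} + (-c i) ^ #{j | f j = i})
                ≤ ∏ _i : ι, (2 : ℝ) :=
                prod_le_prod (fun i _ => ((heven i).pow_add_neg_pow_mem_Icc (hc i)).1)
                  fun i _ => ((heven i).pow_add_neg_pow_mem_Icc (hc i)).2
            _ = 2 ^ Fintype.card ι := by simp
        · push Not at heven
          obtain ⟨i, hi⟩ := heven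
          exact (prod_eq_zero (mem_univ i)
            ((Nat.not_even_iff_odd.1 hi).pow_add_neg_pow_eq_zero _)).le
    _ ≤ 2 ^ Fintype.card ι * (Fintype.card ι ^ k * k ^ (2 * k) : ℕ) := by
        rw [← sum_filter, sum_const, nsmul_eq_mul, mul_comm]
        gcongr
        exact_mod_cast card_filter_even_card_fiber_le hk

/-- Markov's inequality for the `2k`-th moments and a union bound over `𝒯`. -/
lemma exists_forall_abs_signed_sum_le {τ : Type*} (𝒯 : Finset τ) (c : τ → ι → ℝ)
    (hc : ∀ A ∈ 𝒯, ∀ i, |c A i| ≤ 1) {k : ℕ} (hk : 0 < k) {t : ℝ} (ht : 0 ≤ t)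
    (h𝒯 : #𝒯 * (Fintype.card ι ^ k * k ^ (2 * k) : ℕ) < t ^ (2 * k)) :
    ∃ σ : ι → Bool, ∀ A ∈ 𝒯, |∑ i, if σ i then c A i else -c A i| ≤ t := by
  by_contra! hbad
  have hlt : ∑ _σ : ι → Bool, t ^ (2 * k)
      < ∑ σ : ι → Bool, ∑ A ∈ 𝒯,
          (∑ i, if σ i then c A i else -c A i) ^ (2 * k) := by
    refine sum_lt_sum_of_nonempty univ_nonempty fun σ _ => ?_
    obtain ⟨A, hA, htA⟩ := hbad σ
    calc t ^ (2 * k) < |∑ i, if σ i then c A i else -c A i| ^ (2 * k) :=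
          pow_lt_pow_left₀ htA ht (by omega)
      _ = (∑ i, if σ i then c A i else -c A i) ^ (2 * k) := (even_two_mul k).pow_abs _
      _ ≤ ∑ A ∈ 𝒯, (∑ i, if σ i then c A i else -c A i) ^ (2 * k) :=
          single_le_sum (f := fun A => (∑ i, if σ i then c A i else -c A i) ^ (2 * k))
            (fun A _ => (even_two_mul k).pow_nonneg _) hA
  rw [sum_comm] at hlt
  have hle := sum_le_sum fun A hA => sum_pow_signed_sum_le (c A) (hc A hA) hk
  rw [sum_const, card_univ, Fintype.card_fun, Fintype.card_bool, nsmul_eq_mul] at hlt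
  rw [sum_const, nsmul_eq_mul] at hle
  push_cast at hlt
  nlinarith [mul_lt_mul_of_pos_left h𝒯 (pow_pos (two_pos (α := ℝ)) (Fintype.card ι))]

end Moments

lemma sum_range_choose_le_pow (N d : ℕ) :
    ∑ i ∈ range (d + 1), N.choose i ≤ (N + 1) ^ d := by
  induction d with
  | zero => simp
  | succ d ih =>
    rw [sum_range_succ, pow_succ, mul_add_one, add_comm]
    gcongr
    calc N.choose (d + 1) ≤ N ^ d * N := (Nat.choose_le_pow N (d + 1)).trans_eq (pow_succ N d)
      _ ≤ (N + 1) ^ d * N := by gcongr; omega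

section Traces

open scoped Classical

variable {X κ : Type*} [Fintype κ]

noncomputable def traces (F : Set (Set X)) (b : κ → X) : Finset (Finset κ) :=
  {B | ∃ S ∈ F, B = ({j | b j ∈ S} : Finset κ)}

lemma mem_traces {F : Set (Set X)} {b : κ → X} {B : Finset κ} :
    B ∈ traces F b ↔ ∃ S ∈ F, B = ({j | b j ∈ S} : Finset κ) := by
  simp [traces]

lemma Finset.Shatters.shatters_image_of_traces {F : Set (Set X)} {b : κ → X} {A : Finset κ}
    (hA : (traces F b).Shatters A) : _root_.Shatters F (A.image b) := by
  intro B hB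
  obtain ⟨u, hu, huA⟩ := hA (filter_subset (fun j => b j ∈ B) A)
  obtain ⟨S, hS, rfl⟩ := mem_traces.1 hu
  refine ⟨S, hS, fun x hx => ?_⟩
  obtain ⟨j, hj, rfl⟩ := mem_image.1 hx
  have := congrArg (j ∈ ·) huA
  simp only [mem_inter, mem_filter, mem_univ, true_and] at this
  tauto

lemma Finset.Shatters.injOn_of_traces {F : Set (Set X)} {b : κ → X} {A : Finset κ}
    (hA : (traces F b).Shatters A) : Set.InjOn b A := by
  intro i hi j hj hij
  obtain ⟨u, hu, huA⟩ := hA.exists_inter_eq_singleton hi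
  obtain ⟨S, -, rfl⟩ := mem_traces.1 hu
  have hjS : j ∈ A ∩ ({j | b j ∈ S} : Finset κ) := by
    have := congrArg (i ∈ ·) huA
    simp only [mem_inter, mem_filter, mem_univ, true_and, mem_singleton, eq_iff_iff,
      iff_true] at this ⊢
    exact ⟨hj, hij ▸ this.2⟩
  rw [huA, mem_singleton] at hjS
  exact hjS.symm

lemma card_traces_le {F : Set (Set X)} {d : ℕ} (hF : VCDimLE F d) (b : κ → X) :
    #(traces F b) ≤ (Fintype.card κ + 1) ^ d := by
  have hvc : (traces F b).vcDim ≤ d := Finset.sup_le fun A hA => by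
    have hA := mem_shatterer.1 hA
    rw [← card_image_of_injOn hA.injOn_of_traces]
    exact hF _ hA.shatters_image_of_traces
  calc #(traces F b) ≤ #(traces F b).shatterer := card_le_card_shatterer _
    _ ≤ ∑ i ∈ Iic (traces F b).vcDim, (Fintype.card κ).choose i :=
        card_shatterer_le_sum_vcDim
    _ ≤ ∑ i ∈ range (d + 1), (Fintype.card κ).choose i := by
        rw [Nat.range_succ_eq_Iic]; exact sum_le_sum_of_subset (Iic_subset_Iic.2 hvc)
    _ ≤ (Fintype.card κ + 1) ^ d := sum_range_choose_le_pow _ _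

end Traces

section Halving

variable {X ι : Type*} [Fintype ι]

noncomputable def sampleAvg (a : ι → X) (S : Set X) : ℝ :=
  (∑ i, S.indicator (fun _ => (1 : ℝ)) (a i)) / Fintype.card ι

lemma sampleAvg_fin {m : ℕ} (a : Fin m → X) (S : Set X) :
    sampleAvg a S = (∑ i : Fin m, S.indicator (fun _ => (1 : ℝ)) (a i)) / m := by
  simp [sampleAvg]

lemma sampleAvg_comp_equiv {κ : Type*} [Fintype κ] (a : ι → X) (e : κ ≃ ι) (S : Set X) :
    sampleAvg (a ∘ e) S = sampleAvg a S := by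
  rw [sampleAvg, sampleAvg, Fintype.card_congr e]
  exact congrArg (· / _) (e.sum_comp fun i => S.indicator (fun _ => (1 : ℝ)) (a i))

lemma sampleAvg_select_sub_sampleAvg (b : Bool × ι → X) (σ : ι → Bool) (S : Set X) :
    sampleAvg (fun i => b (σ i, i)) S - sampleAvg b S
      = (∑ i, if σ i then S.indicator (fun _ => (1 : ℝ)) (b (true, i))
                - S.indicator (fun _ => (1 : ℝ)) (b (false, i))
              else -(S.indicator (fun _ => (1 : ℝ)) (b (true, i))
                - S.indicator (fun _ => (1 : ℝ)) (b (false, i)))) / (2 * Fintype.card ι) := by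
  rw [sampleAvg, sampleAvg, Fintype.sum_prod_type, Fintype.sum_bool, ← sum_add_distrib,
    Fintype.card_prod, Fintype.card_bool,
    ← mul_div_mul_left _ (Fintype.card ι : ℝ) two_ne_zero, Nat.cast_mul, Nat.cast_two,
    div_sub_div_same, mul_sum, ← sum_sub_distrib]
  congr 1
  refine sum_congr rfl fun i _ => ?_
  cases σ i <;> simp <;> ring

def halvingThreshold (d : ℕ) : ℕ := 3 ^ d * (2 * d + 2) ^ (2 * (2 * d + 2))

lemma lt_pow_of_halvingThreshold_lt {d : ℕ} {s δ : ℝ} (hs : halvingThreshold d < s)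
    (hδ : 1 ≤ δ ^ 4 * s) :
    (3 * s) ^ d * (s ^ (2 * d + 2) * (2 * d + 2) ^ (2 * (2 * d + 2)))
      < (2 * δ * s) ^ (2 * (2 * d + 2)) := by
  have hs0 : 0 < s := lt_of_le_of_lt (Nat.cast_nonneg _) hs
  unfold halvingThreshold at hs
  push_cast at hs
  calc (3 * s) ^ d * (s ^ (2 * d + 2) * (2 * d + 2) ^ (2 * (2 * d + 2)))
      = 3 ^ d * (2 * d + 2) ^ (2 * (2 * d + 2)) * s ^ (3 * d + 2) := by ring
    _ < s * s ^ (3 * d + 2) := by gcongr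
    _ = (1 * s ^ 3) ^ (d + 1) := by ring
    _ ≤ (δ ^ 4 * s * s ^ 3) ^ (d + 1) := by gcongr
    _ ≤ ((2 * δ * s) ^ 4) ^ (d + 1) := by
        gcongr
        nlinarith [pow_nonneg hs0.le 4, pow_nonneg (sq_nonneg δ) 2]
    _ = (2 * δ * s) ^ (2 * (2 * d + 2)) := by rw [← pow_mul]; congr 1; ring

lemma exists_halving {F : Set (Set X)} {d : ℕ} (hF : VCDimLE F d) (b : Bool × ι → X)
    (hs : halvingThreshold d < Fintype.card ι) {δ : ℝ} (hδ : 0 ≤ δ)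
    (hδs : 1 ≤ δ ^ 4 * Fintype.card ι) :
    ∃ σ : ι → Bool,
      ∀ S ∈ F, |sampleAvg (fun i => b (σ i, i)) S - sampleAvg b S| ≤ δ := by
  classical
  have hs1 : (1 : ℝ) ≤ Fintype.card ι := Nat.one_le_cast.2 (Nat.zero_lt_of_lt hs)
  let c : Finset (Bool × ι) → ι → ℝ := fun A i =>
    (if (true, i) ∈ A then 1 else 0) - (if (false, i) ∈ A then 1 else 0)
  have hc : ∀ A ∈ traces F b, ∀ i, |c A i| ≤ 1 := by
    intro A _ i
    simp only [c]
    split_ifs <;> norm_num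
  have hcard : (#(traces F b) : ℝ) ≤ (3 * Fintype.card ι) ^ d := by
    have := card_traces_le hF b
    rw [Fintype.card_prod, Fintype.card_bool] at this
    calc (#(traces F b) : ℝ) ≤ (2 * Fintype.card ι + 1 : ℕ) ^ d := by exact_mod_cast this
      _ ≤ (3 * Fintype.card ι) ^ d := by push_cast; gcongr; linarith
  obtain ⟨σ, hσ⟩ := exists_forall_abs_signed_sum_le (traces F b) c hc (k := 2 * d + 2)
    (by omega) (t := 2 * δ * Fintype.card ι) (by positivity) (by
      push_cast
      calc _ ≤ (3 * (Fintype.card ι : ℝ)) ^ d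
            * ((Fintype.card ι : ℝ) ^ (2 * d + 2) * (2 * d + 2) ^ (2 * (2 * d + 2))) := by
            gcongr
        _ < _ := lt_pow_of_halvingThreshold_lt (by exact_mod_cast hs) hδs)
  refine ⟨σ, fun S hS => ?_⟩
  have hσS := hσ _ (mem_traces.2 ⟨S, hS, rfl⟩)
  simp only [c, mem_filter, mem_univ, true_and] at hσS
  have hs2 : (0 : ℝ) < 2 * Fintype.card ι := by linarith
  rw [sampleAvg_select_sub_sampleAvg, abs_div, abs_of_pos hs2, div_le_iff₀ hs2]
  simp only [Set.indicator_apply]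
  linarith

end Halving

section Resampling

variable {X ι : Type*} [Fintype ι]

lemma exists_iterated_halving {F : Set (Set X)} {d : ℕ} (hF : VCDimLE F d)
    (hs : halvingThreshold d < Fintype.card ι) (δ : ℕ → ℝ) (hδ : ∀ j, 0 ≤ δ j)
    (hδs : ∀ j, 1 ≤ δ j ^ 4 * (2 ^ j * Fintype.card ι)) :
    ∀ (T : ℕ) (b : (Fin T → Bool) × ι → X), ∃ b' : ι → X,
      ∀ S ∈ F, |sampleAvg b' S - sampleAvg b S| ≤ ∑ j ∈ range T, δ j := by
  intro T
  induction T with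
  | zero =>
    intro b
    refine ⟨b ∘ (Equiv.uniqueProd ι _).symm, fun S _ => ?_⟩
    simp [sampleAvg_comp_equiv]
  | succ T ih =>
    intro b
    let e : Bool × ((Fin T → Bool) × ι) ≃ (Fin (T + 1) → Bool) × ι :=
      (Equiv.prodAssoc _ _ _).symm.trans ((Fin.consEquiv fun _ => Bool).prodCongr (Equiv.refl ι))
    have hcard : Fintype.card ((Fin T → Bool) × ι) = 2 ^ T * Fintype.card ι := by simp
    obtain ⟨σ, hσ⟩ := exists_halving hF (b ∘ e)
      (hs.trans_le (by rw [hcard]; exact Nat.le_mul_of_pos_left _ (by positivity))) (hδ T)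
      (by rw [hcard]; exact_mod_cast hδs T)
    obtain ⟨b', hb'⟩ := ih fun i => (b ∘ e) (σ i, i)
    refine ⟨b', fun S hS => ?_⟩
    have hhalf := hσ S hS
    rw [sampleAvg_comp_equiv] at hhalf
    rw [sum_range_succ]
    linarith [hb' S hS, abs_sub_le (sampleAvg b' S) (sampleAvg (fun i => (b ∘ e) (σ i, i)) S)
      (sampleAvg b S)]

/-- The halving steps `2 ^ T q ^ 4 → ⋯ → q ^ 4` with errors `(7/8) ^ j / q`: these satisfy
`1 ≤ δ ^ 4 · (sample size)` because `(7/8) ^ 4 · 2 > 1`, and they sum to at most `8 / q`. -/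
lemma exists_subsample {F : Set (Set X)} {d : ℕ} (hF : VCDimLE F d) {q : ℕ} (hq : 0 < q)
    (hqs : q ^ 4 ≤ Fintype.card ι) (hs : halvingThreshold d < Fintype.card ι) (T : ℕ)
    (b : (Fin T → Bool) × ι → X) :
    ∃ b' : ι → X, ∀ S ∈ F, |sampleAvg b' S - sampleAvg b S| ≤ 8 / q := by
  have hq0 : (0 : ℝ) < q := by exact_mod_cast hq
  obtain ⟨b', hb'⟩ := exists_iterated_halving hF hs (fun j => (7 / 8) ^ j / q)
    (fun j => by positivity) (fun j => by
      calc (1 : ℝ) ≤ ((7 / 8) ^ 4 * 2) ^ j := one_le_pow₀ (by norm_num)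
        _ = ((7 / 8) ^ j / q) ^ 4 * (2 ^ j * q ^ 4) := by
            rw [mul_pow, ← pow_mul, mul_comm 4 j, pow_mul]
            field_simp
        _ ≤ ((7 / 8) ^ j / q) ^ 4 * (2 ^ j * Fintype.card ι) := by
            gcongr; exact_mod_cast hqs) T b
  refine ⟨b', fun S hS => (hb' S hS).trans ?_⟩
  rw [← sum_div, div_le_div_iff_of_pos_right hq0]
  calc ∑ j ∈ range T, ((7 : ℝ) / 8) ^ j ≤ (7 / 8) ^ 0 / (1 - 7 / 8) := by
        rw [range_eq_Ico]; exact geom_sum_Ico_le_of_lt_one (by norm_num) (by norm_num)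
    _ = 8 := by norm_num

lemma card_filter_val_mod_eq (N : ℕ) {m : ℕ} (hm : 0 < m) (j : Fin m) :
    #{i : Fin N | (i : ℕ) % m = j} = N / m + if (j : ℕ) < N % m then 1 else 0 := by
  rw [← Nat.mod_eq_of_lt j.isLt, ← Nat.count_modEq_card N hm, Nat.count_eq_card_filter_range,
    ← Nat.Iio_eq_range, ← Fin.map_valEmbedding_univ, filter_map, card_map]
  rfl

lemma abs_card_filter_val_mod_eq_div_sub_le {N m : ℕ} (hN : 0 < N) (hm : 0 < m) (j : Fin m) :
    |(#{i : Fin N | (i : ℕ) % m = j} : ℝ) / N - 1 / m| ≤ 1 / N := by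
  have hdiv : (N : ℝ) = m * (N / m : ℕ) + (N % m : ℕ) := by
    exact_mod_cast (Nat.div_add_mod N m).symm
  have hmod : ((N % m : ℕ) : ℝ) < m := by exact_mod_cast Nat.mod_lt N hm
  have hN' : (0 : ℝ) < N := by exact_mod_cast hN
  have hm' : (0 : ℝ) < m := by exact_mod_cast hm
  have hfib : |(#{i : Fin N | (i : ℕ) % m = j} : ℝ) * m - N| ≤ m := by
    rw [card_filter_val_mod_eq N hm, abs_le]
    constructor <;> split_ifs <;> push_cast <;> nlinarith [Nat.zero_le (N % m)]
  calc |(#{i : Fin N | (i : ℕ) % m = j} : ℝ) / N - 1 / m|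
      = |(#{i : Fin N | (i : ℕ) % m = j} : ℝ) * m - N| / (N * m) := by
        rw [div_sub_div _ _ hN'.ne' hm'.ne', abs_div, abs_of_pos (mul_pos hN' hm'), mul_one]
    _ ≤ m / (N * m) := by gcongr
    _ = 1 / N := by field_simp

lemma exists_resample {m : ℕ} (hm : 0 < m) (a : Fin m → X) (κ : Type*) [Fintype κ]
    [Nonempty κ] :
    ∃ b : κ → X, ∀ S, |sampleAvg b S - sampleAvg a S| ≤ m / Fintype.card κ := by
  set N := Fintype.card κ
  have hN : 0 < N := Fintype.card_pos
  let r : Fin N → Fin m := fun i => ⟨i % m, Nat.mod_lt _ hm⟩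
  refine ⟨(a ∘ r) ∘ Fintype.equivFin κ, fun S => ?_⟩
  rw [sampleAvg_comp_equiv]
  set f : Fin m → ℝ := fun j => S.indicator (fun _ => 1) (a j)
  have hsum : sampleAvg (a ∘ r) S - sampleAvg a S
      = ∑ j, f j * ((#{i : Fin N | (i : ℕ) % m = j} : ℝ) / N - 1 / m) := by
    simp only [sampleAvg, Fintype.card_fin, Function.comp_apply]
    rw [← sum_fiberwise' univ r f, sum_div, sum_div, ← sum_sub_distrib]
    refine sum_congr rfl fun j _ => ?_
    simp only [sum_const, nsmul_eq_mul, r, Fin.ext_iff]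
    ring
  rw [hsum]
  calc |∑ j, f j * ((#{i : Fin N | (i : ℕ) % m = j} : ℝ) / N - 1 / m)|
      ≤ ∑ j, |f j| * |(#{i : Fin N | (i : ℕ) % m = j} : ℝ) / N - 1 / m| := by
        simp only [← abs_mul]; exact abs_sum_le_sum_abs _ _
    _ ≤ ∑ _j : Fin m, 1 * (1 / (N : ℝ)) := by
        gcongr with j
        · by_cases h : a j ∈ S <;> simp [f, h]
        · exact abs_card_filter_val_mod_eq_div_sub_le hN hm j
    _ = m / N := by simp [div_eq_mul_inv]

end Resampling

theorem stmt_7 (d : ℕ) (ε : ℝ) (hε : 0 < ε) :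
    ∃ n : ℕ, 0 < n ∧
      ∀ (X : Type) (F : Set (Set X)) (μ : Set X → ℝ),
        VCDimLE F d → IsFAP μ →
        (∃ (m : ℕ) (_ : 0 < m) (a : Fin m → X), ∀ S ∈ F,
          |μ S - (∑ i : Fin m, S.indicator (fun _ => (1 : ℝ)) (a i)) / m| ≤ ε / 2) →
        ∃ a : Fin n → X, ∀ S ∈ F,
          |μ S - (∑ i : Fin n, S.indicator (fun _ => (1 : ℝ)) (a i)) / n| ≤ ε := by
  obtain ⟨q, hq⟩ := exists_nat_gt (max (32 / ε) (halvingThreshold d))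
  rw [max_lt_iff, Nat.cast_lt] at hq
  have hq0 : 0 < q := Nat.zero_lt_of_lt hq.2
  refine ⟨q ^ 4, by positivity, fun X F μ hF _ ⟨m, hm, a, ha⟩ => ?_⟩
  obtain ⟨T, hT⟩ := pow_unbounded_of_one_lt (4 * m / ε) (one_lt_two : (1 : ℝ) < 2)
  have : NeZero (q ^ 4) := ⟨by positivity⟩
  obtain ⟨b, hb⟩ := exists_resample hm a ((Fin T → Bool) × Fin (q ^ 4))
  obtain ⟨b', hb'⟩ := exists_subsample hF hq0 (by simp)
    (by simpa using hq.2.trans_le (Nat.le_self_pow (by norm_num) q)) T b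
  refine ⟨b', fun S hS => ?_⟩
  have hround : (m : ℝ) / Fintype.card ((Fin T → Bool) × Fin (q ^ 4)) ≤ ε / 4 := by
    simp only [Fintype.card_prod, Fintype.card_fun, Fintype.card_bool, Fintype.card_fin]
    rw [div_le_iff₀ (by positivity)]
    rw [div_lt_iff₀ hε] at hT
    push_cast
    have hq4 : (1 : ℝ) ≤ q ^ 4 := one_le_pow₀ (by exact_mod_cast hq0)
    nlinarith [mul_le_mul_of_nonneg_left hq4 (by positivity : (0 : ℝ) ≤ 2 ^ T * ε)]
  have hhalving : (8 : ℝ) / q ≤ ε / 4 := by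
    rw [div_le_iff₀ (by positivity)]
    rw [div_lt_iff₀ hε] at hq
    linarith
  simp_rw [← sampleAvg_fin] at ha ⊢
  calc |μ S - sampleAvg b' S|
      ≤ |μ S - sampleAvg a S| + |sampleAvg a S - sampleAvg b' S| := abs_sub_le _ _ _
    _ ≤ |μ S - sampleAvg a S|
          + (|sampleAvg a S - sampleAvg b S| + |sampleAvg b S - sampleAvg b' S|) := by
        gcongr; exact abs_sub_le _ _ _
    _ ≤ ε / 2 + (ε / 4 + ε / 4) := by
        gcongr
        exacts [ha S hS, (abs_sub_comm _ _).trans_le ((hb S).trans hround),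
          (abs_sub_comm _ _).trans_le ((hb' S hS).trans hhalving)]
    _ = ε := by ring
end

section
/- Let F be a set system on a set X. Suppose that for every ε > 0 there is n such that every measure in a family M of finitely additive probability measures on X admits an ε-approximation by an average of n points with respect to F. Let (μ_i)_{i∈I} be measures in M on sets X_i each carrying a copy of the system F_i, and let U be an ultrafilter on I. Then the ultralimit measure on the ultraproduct of the X_i (defined on internal sets by taking U-limits of the μ_i-values) again admits, for every ε > 0, an ε-approximation by an average of finitely many points with respect to the ultraproduct set system. -/
open scoped Classical

theorem stmt_8 {I : Type*} (U : Ultrafilter I)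
    (X : I → Type*) (F : ∀ i, Set (Set (X i)))
    (μ : ∀ i, Set (X i) → ℝ) (hμ : ∀ i, IsFAP (μ i))
    -- uniform approximability of the family: for every ε there is a single n
    -- such that every μ i is ε-approximated by an average of n points w.r.t. F i
    (happrox : ∀ ε > (0 : ℝ), ∃ n : ℕ, 0 < n ∧ ∀ i, ∃ a : Fin n → X i,
      ∀ S ∈ F i, |μ i S - (∑ k : Fin n, if a k ∈ S then (1 : ℝ) else 0) / n| ≤ ε)
    (ε : ℝ) (hε : 0 < ε) :
    -- the ultraproduct measure (the U-limit r of the values μ i (S i) on an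
    -- internal set [S i]) is ε-approximated by the average of finitely many
    -- points of the ultraproduct, represented by functions a k : ∀ i, X i
    ∃ (n : ℕ) (_ : 0 < n) (a : Fin n → ∀ i, X i),
      ∀ S : ∀ i, Set (X i), (∀ i, S i ∈ F i) →
        ∀ r : ℝ, Filter.Tendsto (fun i => μ i (S i)) (U : Filter I) (nhds r) →
          |r - (∑ k : Fin n, if {i | a k i ∈ S i} ∈ U then (1 : ℝ) else 0) / n| ≤ ε := by
  obtain ⟨n, hn, ha⟩ := happrox ε hε
  choose a ha using ha
  refine ⟨n, hn, fun k i => a i k, ?_⟩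
  intro S hS r htend
  set c : ℝ := (∑ k : Fin n, if {i | a i k ∈ S i} ∈ U then (1 : ℝ) else 0) / n with hc
  have hev : ∀ᶠ i in (U : Filter I), μ i (S i) ∈ Set.Icc (c - ε) (c + ε) := by
    have hkey : ∀ᶠ i in (U : Filter I),
        ∀ k : Fin n, (a i k ∈ S i ↔ {j | a j k ∈ S j} ∈ U) := by
      rw [Filter.eventually_all]
      intro k
      by_cases hk : {j | a j k ∈ S j} ∈ U
      · filter_upwards [hk] with i hi
        simpa [hi] using hk
      · have hk' : {j | a j k ∈ S j}ᶜ ∈ U := Ultrafilter.compl_mem_iff_notMem.2 hk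
        filter_upwards [hk'] with i hi
        simp only [Set.mem_compl_iff, Set.mem_setOf_eq] at hi
        simp [hi, hk]
    filter_upwards [hkey] with i hi
    have heq : (∑ k : Fin n, if a i k ∈ S i then (1 : ℝ) else 0) / n = c := by
      rw [hc]
      congr 1
      exact Finset.sum_congr rfl fun k _ => by rw [if_congr (hi k) rfl rfl]
    have := ha i (S i) (hS i)
    rw [heq] at this
    rw [abs_sub_le_iff] at this
    constructor <;> linarith [this.1, this.2]
  have hr : r ∈ Set.Icc (c - ε) (c + ε) :=
    isClosed_Icc.mem_of_tendsto htend hev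
  rw [abs_sub_le_iff]
  constructor <;> [linarith [hr.2]; linarith [hr.1]]
end

section
/- Let X and Y be finite nonempty sets and R ⊆ X × Y. Let ε ∈ (0,1) and suppose there exist finite unions of rectangles P ⊆ R ⊆ Q with |Q| − |P| ≤ ε·|X|·|Y|, where P and Q are each unions of at most k rectangles. If |R| ≥ α·|X|·|Y| with α > ε, then there exist A ⊆ X and B ⊆ Y with A × B ⊆ R and |A|·|B| ≥ ((α − ε)/4^k)·|X|·|Y|. -/
/-- A union of (at most) `k` rectangles, as a `Finset`. -/
def IsRectUnionK {X Y : Type*} [DecidableEq X] [DecidableEq Y]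
    (k : ℕ) (P : Finset (X × Y)) : Prop :=
  ∃ (A : Fin k → Finset X) (B : Fin k → Finset Y),
    P = Finset.univ.biUnion fun i => A i ×ˢ B i

/-!
Refine `X` and `Y` by the atoms of the Boolean algebras generated by the `k` sides of the
rectangles making up `P`: there are at most `2 ^ k` atoms on each side, and `P` is a union of
products of atoms. By pigeonhole one product of atoms inside `P` carries at least a `4⁻¹ ^ k`
fraction of `P`, and `|P| ≥ |Q| - ε|X||Y| ≥ |R| - ε|X||Y| ≥ (α - ε)|X||Y|`.
-/

open Finset

theorem Finset.exists_card_le_mul_card_fiber {α β : Type*} [Fintype β] [Nonempty β]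
    [DecidableEq β] (s : Finset α) (f : α → β) :
    ∃ b, #s ≤ Fintype.card β * #{a ∈ s | f a = b} := by
  obtain ⟨b, -, hb⟩ := exists_max_image univ (fun b => #{a ∈ s | f a = b}) univ_nonempty
  refine ⟨b, ?_⟩
  calc #s = ∑ b', #{a ∈ s | f a = b'} := card_eq_sum_card_fiberwise fun _ _ => mem_univ _
    _ ≤ #(univ : Finset β) • #{a ∈ s | f a = b} :=
      sum_le_card_nsmul _ _ _ fun b' _ => hb b' (mem_univ _)
    _ = Fintype.card β * #{a ∈ s | f a = b} := by rw [smul_eq_mul, card_univ]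

section Saturated

variable {X Y S T : Type*} [DecidableEq X] [DecidableEq Y]
  [Fintype S] [Fintype T] [Nonempty S] [Nonempty T] [DecidableEq S] [DecidableEq T]

/-- `hP` says that `P` is a union of cells `σ ⁻¹ {s} ×ˢ τ ⁻¹ {t}`. -/
theorem exists_product_subset_card_le_of_saturated (σ : X → S) (τ : Y → T)
    (P : Finset (X × Y))
    (hP : ∀ p ∈ P, ∀ q : X × Y, σ q.1 = σ p.1 → τ q.2 = τ p.2 → q ∈ P) :
    ∃ (A : Finset X) (B : Finset Y), A ×ˢ B ⊆ P ∧
      #P ≤ Fintype.card S * Fintype.card T * (#A * #B) := by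
  obtain ⟨c, hc⟩ := P.exists_card_le_mul_card_fiber fun p => (σ p.1, τ p.2)
  set F := {p ∈ P | (σ p.1, τ p.2) = c}
  have hF : ∀ p ∈ F, p ∈ P ∧ σ p.1 = c.1 ∧ τ p.2 = c.2 := fun p hp => by
    obtain ⟨hpP, hpc⟩ := mem_filter.1 hp
    exact ⟨hpP, congrArg Prod.fst hpc, congrArg Prod.snd hpc⟩
  -- `F` lies in a single cell, so the product of its projections still lies in `P`.
  refine ⟨F.image Prod.fst, F.image Prod.snd, ?_, ?_⟩
  · rintro ⟨x, y⟩ hxy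
    obtain ⟨⟨x', y'⟩, hp, rfl⟩ := mem_image.1 (mem_product.1 hxy).1
    obtain ⟨q, hq, rfl⟩ := mem_image.1 (mem_product.1 hxy).2
    obtain ⟨hpP, -, hp2⟩ := hF _ hp
    exact hP _ hpP _ rfl ((hF q hq).2.2.trans hp2.symm)
  · calc #P ≤ Fintype.card (S × T) * #F := hc
      _ ≤ Fintype.card S * Fintype.card T * (#(F.image Prod.fst) * #(F.image Prod.snd)) := by
        rw [Fintype.card_prod, ← card_product]
        exact Nat.mul_le_mul_left _ (card_le_card subset_product)

end Saturated

theorem IsRectUnionK.exists_product_subset_card_le {X Y : Type*} [DecidableEq X]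
    [DecidableEq Y] {k : ℕ} {P : Finset (X × Y)} (hP : IsRectUnionK k P) :
    ∃ (A : Finset X) (B : Finset Y), A ×ˢ B ⊆ P ∧ #P ≤ 4 ^ k * (#A * #B) := by
  obtain ⟨A, B, rfl⟩ := hP
  obtain ⟨A', B', hsub, hcard⟩ := exists_product_subset_card_le_of_saturated
    (fun x i => decide (x ∈ A i)) (fun y i => decide (y ∈ B i)) _ fun p hp q hqA hqB => by
      obtain ⟨i, -, hi⟩ := mem_biUnion.1 hp
      have hA := congrFun hqA i
      have hB := congrFun hqB i
      simp only [decide_eq_decide] at hA hB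
      exact mem_biUnion.2 ⟨i, mem_univ _, mem_product.2
        ⟨hA.2 (mem_product.1 hi).1, hB.2 (mem_product.1 hi).2⟩⟩
  refine ⟨A', B', hsub, ?_⟩
  simpa only [Fintype.card_fun, Fintype.card_bool, Fintype.card_fin, ← mul_pow, Nat.reduceMul]
    using hcard

theorem stmt_9_general {X Y : Type*} [Fintype X] [Fintype Y] [DecidableEq X] [DecidableEq Y]
    (R : Finset (X × Y)) (ε : ℝ) (k : ℕ)
    (P Q : Finset (X × Y)) (hP : IsRectUnionK k P)
    (hPR : P ⊆ R) (hRQ : R ⊆ Q)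
    (hgap : (Q.card : ℝ) - P.card ≤ ε * Fintype.card X * Fintype.card Y)
    (α : ℝ)
    (hR : (R.card : ℝ) ≥ α * Fintype.card X * Fintype.card Y) :
    ∃ (A : Finset X) (B : Finset Y), (A ×ˢ B : Finset (X × Y)) ⊆ R ∧
      ((A.card : ℝ) * B.card ≥ ((α - ε) / 4 ^ k) * Fintype.card X * Fintype.card Y) := by
  obtain ⟨A, B, hAB, hcard⟩ := hP.exists_product_subset_card_le
  refine ⟨A, B, hAB.trans hPR, ?_⟩
  have hRQ' : (#R : ℝ) ≤ #Q := by exact_mod_cast card_le_card hRQ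
  have hcard' : (#P : ℝ) ≤ 4 ^ k * (#A * #B) := by exact_mod_cast hcard
  rw [ge_iff_le, div_mul_eq_mul_div, div_mul_eq_mul_div, div_le_iff₀ (by positivity)]
  linarith

theorem stmt_9 {X Y : Type*} [Fintype X] [Fintype Y] [DecidableEq X] [DecidableEq Y]
    [Nonempty X] [Nonempty Y]
    (R : Finset (X × Y)) (ε : ℝ) (hε0 : 0 < ε) (hε1 : ε < 1) (k : ℕ)
    (P Q : Finset (X × Y)) (hP : IsRectUnionK k P) (hQ : IsRectUnionK k Q)
    (hPR : P ⊆ R) (hRQ : R ⊆ Q)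
    (hgap : (Q.card : ℝ) - P.card ≤ ε * Fintype.card X * Fintype.card Y)
    (α : ℝ) (hα : ε < α)
    (hR : (R.card : ℝ) ≥ α * Fintype.card X * Fintype.card Y) :
    ∃ (A : Finset X) (B : Finset Y), (A ×ˢ B : Finset (X × Y)) ⊆ R ∧
      ((A.card : ℝ) * B.card ≥ ((α - ε) / 4 ^ k) * Fintype.card X * Fintype.card Y) :=
  stmt_9_general R ε k P Q hP hPR hRQ hgap α hR
end

section
/- Let X, Y be sets, μ a finitely additive probability measure on X and λ a finitely additive probability measure on Y, and R ⊆ X × Y with the property that for every ε > 0 there are finite unions of rectangles P_ε ⊆ R ⊆ Q_ε with (μ×λ)(Q_ε) − (μ×λ)(P_ε) ≤ ε. If (μ×λ)-outer measure of R is at least α > 0, then for every δ < α there exist A ⊆ X and B ⊆ Y with A × B ⊆ R, μ(A) > 0 and λ(B) > 0, and in fact μ(A)·λ(B) ≥ (α − ε)/N(ε) where N(ε) is the number of atom-pairs in the partitions generated by the rectangles in P_ε, Q_ε. -/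
/-- A union of `n` rectangles. -/
def IsRectUnionN {X Y : Type*} (n : ℕ) (P : Set (X × Y)) : Prop :=
  ∃ (A : Fin n → Set X) (B : Fin n → Set Y), P = ⋃ i, A i ×ˢ B i

theorem LinearMap.exists_extension_comp_of_le_sublinear {M E : Type*} [AddCommGroup M]
    [Module ℝ M] [AddCommGroup E] [Module ℝ E] (π : M →ₗ[ℝ] E) (I : M →ₗ[ℝ] ℝ) (N : E → ℝ)
    (N_hom : ∀ c : ℝ, 0 < c → ∀ x, N (c • x) = c * N x) (N_add : ∀ x y, N (x + y) ≤ N x + N y)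
    (hI : ∀ m, I m ≤ N (π m)) :
    ∃ G : E →ₗ[ℝ] ℝ, G ∘ₗ π = I ∧ ∀ x, G x ≤ N x := by
  have N_zero : N 0 = 0 := by
    have := N_hom 2 two_pos 0
    rw [smul_zero] at this
    linarith
  have hker : LinearMap.ker π ≤ LinearMap.ker I := fun m (hm : π m = 0) => by
    have h₁ := hI m
    have h₂ := hI (-m)
    rw [map_neg, map_neg, hm, neg_zero, N_zero] at h₂
    rw [hm, N_zero] at h₁
    exact le_antisymm h₁ (by linarith)
  let f : LinearMap.range π →ₗ[ℝ] ℝ :=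
    (LinearMap.ker π).liftQ I hker ∘ₗ π.quotKerEquivRange.symm.toLinearMap
  have hf : ∀ m, f ⟨π m, LinearMap.mem_range_self π m⟩ = I m := fun m => by
    simp [f]
  obtain ⟨G, hGf, hGN⟩ := exists_extension_of_le_sublinear ⟨LinearMap.range π, f⟩ N N_hom N_add
    (by rintro ⟨_, m, rfl⟩; exact (hf m).trans_le (hI m))
  exact ⟨G, LinearMap.ext fun m => (hGf ⟨π m, LinearMap.mem_range_self π m⟩).trans (hf m), hGN⟩

section BoundedFunctions

variable {Z : Type*}

noncomputable def lpInftyIndicator (S : Set Z) : lp (fun _ : Z => ℝ) ⊤ :=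
  ⟨S.indicator 1, memℓp_infty ⟨1, by
    rintro _ ⟨z, rfl⟩
    by_cases hz : z ∈ S <;> simp [hz]⟩⟩

theorem coe_lpInftyIndicator (S : Set Z) : ⇑(lpInftyIndicator S) = S.indicator 1 := rfl

theorem norm_lpInftyIndicator_le (S : Set Z) : ‖lpInftyIndicator S‖ ≤ 1 :=
  lp.norm_le_of_forall_le zero_le_one fun z => by
    by_cases hz : z ∈ S <;> simp [coe_lpInftyIndicator, hz]

theorem lpInftyIndicator_union {S T : Set Z} (h : Disjoint S T) :
    lpInftyIndicator (S ∪ T) = lpInftyIndicator S + lpInftyIndicator T :=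
  lp.ext (Set.indicator_union_of_disjoint h 1)

theorem isFAP_of_le_norm (G : lp (fun _ : Z => ℝ) ⊤ →ₗ[ℝ] ℝ)
    (hG₁ : G (lpInftyIndicator Set.univ) = 1) (hG : ∀ f, G f ≤ ‖f‖) :
    IsFAP fun S => G (lpInftyIndicator S) := by
  have hunion : ∀ S T : Set Z, Disjoint S T →
      G (lpInftyIndicator (S ∪ T)) = G (lpInftyIndicator S) + G (lpInftyIndicator T) :=
    fun S T h => by rw [lpInftyIndicator_union h, map_add]
  refine ⟨hG₁, fun S => ?_, hunion⟩
  -- `G S = 1 - G Sᶜ ≥ 1 - ‖1_{Sᶜ}‖ ≥ 0`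
  have := hunion S Sᶜ disjoint_compl_right
  rw [Set.union_compl_self, hG₁] at this
  linarith [(hG _).trans (norm_lpInftyIndicator_le Sᶜ)]

end BoundedFunctions

namespace IsFAP

variable {X Y : Type*} {m : Set X → ℝ} {l : Set Y → ℝ}

theorem nonneg (hm : IsFAP m) (A : Set X) : 0 ≤ m A := hm.2.1 A

theorem union (hm : IsFAP m) {A C : Set X} (h : Disjoint A C) : m (A ∪ C) = m A + m C :=
  hm.2.2 A C h

theorem empty (hm : IsFAP m) : m ∅ = 0 := by
  simpa using hm.union (disjoint_bot_left (a := (∅ : Set X)))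

theorem inter_add_diff (hm : IsFAP m) (A D : Set X) : m (A ∩ D) + m (A \ D) = m A := by
  rw [← hm.union (Set.disjoint_sdiff_inter.symm), Set.inter_union_sdiff]

theorem biUnion (hm : IsFAP m) {ι : Type*} (s : Finset ι) (C : ι → Set X)
    (hC : (s : Set ι).PairwiseDisjoint C) : m (⋃ i ∈ s, C i) = ∑ i ∈ s, m (C i) := by
  classical
  induction s using Finset.induction_on with
  | empty => simpa using hm.empty
  | insert a s has ih =>
    rw [Finset.coe_insert, Set.pairwiseDisjoint_insert] at hC
    rw [Finset.set_biUnion_insert, Finset.sum_insert has, hm.union, ih hC.1]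
    exact Set.disjoint_iUnion₂_right.mpr fun i hi => hC.2 i hi (ne_of_mem_of_not_mem hi has).symm

theorem preimage_finset_eq_sum (hm : IsFAP m) {β : Type*} (f : X → β) (T : Finset β) :
    m (f ⁻¹' T) = ∑ b ∈ T, m (f ⁻¹' {b}) := by
  rw [← hm.biUnion T _ fun b _ c _ hbc => Set.disjoint_singleton.mpr hbc |>.preimage f]
  congr 1
  ext x
  simp

/-- The left side is the integral over `D` of the step function `∑ c i • (A i).indicator 1`.
Induct on the steps, splitting `D` along the new set `A a`. -/
theorem sum_mul_inter_le (hm : IsFAP m) {ι : Type*} (s : Finset ι) (c : ι → ℝ)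
    (A : ι → Set X) (D : Set X) (M : ℝ)
    (hM : ∀ x ∈ D, ∑ i ∈ s, c i * (A i).indicator 1 x ≤ M) :
    ∑ i ∈ s, c i * m (A i ∩ D) ≤ M * m D := by
  classical
  induction s using Finset.induction_on generalizing D M with
  | empty =>
    rcases D.eq_empty_or_nonempty with rfl | ⟨x, hx⟩
    · simp [hm.empty]
    · simpa using mul_nonneg (by simpa using hM x hx) (hm.nonneg D)
  | insert a s has ih =>
    have hin := ih (D ∩ A a) (M - c a) fun x hx => by
      have := hM x hx.1
      rw [Finset.sum_insert has, Set.indicator_of_mem hx.2, Pi.one_apply, mul_one] at this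
      linarith
    have hout := ih (D \ A a) M fun x hx => by
      have := hM x hx.1
      rwa [Finset.sum_insert has, Set.indicator_of_notMem hx.2, mul_zero, zero_add] at this
    have hsplit : ∀ i, m (A i ∩ (D ∩ A a)) + m (A i ∩ (D \ A a)) = m (A i ∩ D) := fun i => by
      rw [← Set.inter_assoc, ← Set.inter_sdiff_assoc, hm.inter_add_diff]
    rw [Finset.sum_insert has, ← Finset.sum_congr rfl fun i _ => congrArg (c i * ·) (hsplit i)]
    simp only [mul_add, Finset.sum_add_distrib]
    rw [Set.inter_comm (A a) D]
    have := hm.inter_add_diff D (A a)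
    linear_combination hin + hout + M * this

theorem sum_mul_le (hm : IsFAP m) {ι : Type*} (s : Finset ι) (c : ι → ℝ) (A : ι → Set X)
    (M : ℝ) (hM : ∀ x, ∑ i ∈ s, c i * (A i).indicator 1 x ≤ M) :
    ∑ i ∈ s, c i * m (A i) ≤ M := by
  simpa [hm.1] using hm.sum_mul_inter_le s c A Set.univ M fun x _ => hM x

/-- Integrating out `y` and then `x` bounds a rectangle step function by its supremum. -/
theorem sum_mul_prod_le (hm : IsFAP m) (hl : IsFAP l) {ι : Type*} (s : Finset ι) (c : ι → ℝ)
    (A : ι → Set X) (B : ι → Set Y) (M : ℝ)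
    (hM : ∀ z, ∑ i ∈ s, c i * (A i ×ˢ B i).indicator 1 z ≤ M) :
    ∑ i ∈ s, c i * (m (A i) * l (B i)) ≤ M := by
  have hx : ∀ x, ∑ i ∈ s, c i * l (B i) * (A i).indicator 1 x ≤ M := fun x => by
    refine le_trans (le_of_eq ?_) (hl.sum_mul_le s (fun i => c i * (A i).indicator 1 x) B M
      fun y => le_trans (le_of_eq ?_) (hM (x, y)))
    · exact Finset.sum_congr rfl fun i _ => by ring
    · exact Finset.sum_congr rfl fun i _ => by rw [Set.indicator_prod_one]; ring
  refine le_trans (le_of_eq ?_) (hm.sum_mul_le s (fun i => c i * l (B i)) A M hx)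
  exact Finset.sum_congr rfl fun i _ => by ring

theorem exists_isFAP_prod (hm : IsFAP m) (hl : IsFAP l) :
    ∃ ω : Set (X × Y) → ℝ, IsFAP ω ∧ ∀ A B, ω (A ×ˢ B) = m A * l B := by
  let π : (Set X × Set Y →₀ ℝ) →ₗ[ℝ] lp (fun _ : X × Y => ℝ) ⊤ :=
    Finsupp.linearCombination ℝ fun k => lpInftyIndicator (k.1 ×ˢ k.2)
  let I : (Set X × Set Y →₀ ℝ) →ₗ[ℝ] ℝ :=
    Finsupp.linearCombination ℝ fun k => m k.1 * l k.2
  have hI : ∀ c, I c ≤ ‖π c‖ := fun c => by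
    refine hm.sum_mul_prod_le hl c.support c (fun k => k.1) (fun k => k.2) _ fun z => ?_
    have hπ : (π c) z = ∑ k ∈ c.support, c k * (k.1 ×ˢ k.2).indicator 1 z := by
      simp only [π, Finsupp.linearCombination_apply, Finsupp.sum, lp.coeFn_sum, lp.coeFn_smul,
        coe_lpInftyIndicator, Finset.sum_apply, Pi.smul_apply, smul_eq_mul]
    rw [← hπ]
    exact (Real.le_norm_self _).trans (lp.norm_apply_le_norm ENNReal.top_ne_zero _ z)
  obtain ⟨G, hGπ, hG⟩ := LinearMap.exists_extension_comp_of_le_sublinear π I (‖·‖)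
    (fun c hc f => by rw [norm_smul, Real.norm_of_nonneg hc.le]) norm_add_le hI
  have hrect : ∀ A B, G (lpInftyIndicator (A ×ˢ B)) = m A * l B := fun A B => by
    simpa [π, I] using LinearMap.congr_fun hGπ (Finsupp.single (A, B) 1)
  refine ⟨_, isFAP_of_le_norm G ?_ hG, hrect⟩
  rw [← Set.univ_prod_univ, hrect, hm.1, hl.1, one_mul]

end IsFAP

theorem IsRectUnionN.exists_prod_subset_div_le {X Y : Type*} {μ : Set X → ℝ} {l : Set Y → ℝ}
    {ω : Set (X × Y) → ℝ} (hω : IsFAP ω) (hωprod : ∀ A B, ω (A ×ˢ B) = μ A * l B)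
    {n : ℕ} {P : Set (X × Y)} (hP : IsRectUnionN n P) :
    ∃ (A : Set X) (B : Set Y), A ×ˢ B ⊆ P ∧ ω P / (2 ^ n * 2 ^ n) ≤ μ A * l B := by
  classical
  obtain ⟨A, B, rfl⟩ := hP
  let σX : X → Set (Fin n) := fun x => {i | x ∈ A i}
  let σY : Y → Set (Fin n) := fun y => {i | y ∈ B i}
  let T : Finset (Set (Fin n) × Set (Fin n)) := Finset.univ.filter fun p => (p.1 ∩ p.2).Nonempty
  have hPT : ⋃ i, A i ×ˢ B i = Prod.map σX σY ⁻¹' T := by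
    ext; simp [σX, σY, T, Set.Nonempty]
  have hfiber : ∀ p, Prod.map σX σY ⁻¹' {p} = (σX ⁻¹' {p.1}) ×ˢ (σY ⁻¹' {p.2}) := fun p => by
    ext; simp [Prod.ext_iff]
  have hsum : ω (⋃ i, A i ×ˢ B i) = ∑ p ∈ T, μ (σX ⁻¹' {p.1}) * l (σY ⁻¹' {p.2}) := by
    rw [hPT, hω.preimage_finset_eq_sum]
    simp_rw [hfiber, hωprod]
  rw [hsum]
  set S := ∑ p ∈ T, μ (σX ⁻¹' {p.1}) * l (σY ⁻¹' {p.2})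
  rcases le_or_gt S 0 with hS | hS
  · refine ⟨∅, ∅, by simp, ?_⟩
    rw [← hωprod, Set.empty_prod, hω.empty]
    exact div_nonpos_of_nonpos_of_nonneg hS (by positivity)
  have hcard : (T.card : ℝ) ≤ 2 ^ n * 2 ^ n := by
    exact_mod_cast T.card_le_univ.trans_eq (by simp [Fintype.card_set])
  obtain ⟨p, hpT, hp⟩ := Finset.exists_le_of_sum_le (Finset.nonempty_of_sum_ne_zero hS.ne')
    (f := fun _ => S / (2 ^ n * 2 ^ n)) (g := fun p => μ (σX ⁻¹' {p.1}) * l (σY ⁻¹' {p.2})) (by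
      rw [Finset.sum_const, nsmul_eq_mul]
      calc (T.card : ℝ) * (S / (2 ^ n * 2 ^ n)) ≤ 2 ^ n * 2 ^ n * (S / (2 ^ n * 2 ^ n)) := by
            gcongr
        _ = S := by field_simp)
  refine ⟨σX ⁻¹' {p.1}, σY ⁻¹' {p.2}, ?_, hp⟩
  rw [← hfiber, hPT]
  exact Set.preimage_mono (by simpa using hpT)

theorem stmt_10_general {X Y : Type*} (μ : Set X → ℝ) (l : Set Y → ℝ)
    (hμ : IsFAP μ) (hl : IsFAP l) (R : Set (X × Y)) (α : ℝ)
    (happrox : ∀ ε > (0 : ℝ), ∃ (nP nQ : ℕ) (P Q : Set (X × Y)),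
      IsRectUnionN nP P ∧ IsRectUnionN nQ Q ∧ P ⊆ R ∧ R ⊆ Q ∧
      ∀ ω : Set (X × Y) → ℝ, IsFAP ω →
        (∀ (A : Set X) (B : Set Y), ω (A ×ˢ B) = μ A * l B) → ω Q - ω P ≤ ε)
    -- the (μ×λ)-outer measure of R is at least α: every cover of R by a finite
    -- union of rectangles has product measure at least α
    (houter : ∀ (nQ : ℕ) (Q : Set (X × Y)), IsRectUnionN nQ Q → R ⊆ Q →
      ∀ ω : Set (X × Y) → ℝ, IsFAP ω →
        (∀ (A : Set X) (B : Set Y), ω (A ×ˢ B) = μ A * l B) → α ≤ ω Q) :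
    (∀ δ : ℝ, 0 < δ → δ < α → ∃ (A : Set X) (B : Set Y),
        A ×ˢ B ⊆ R ∧ 0 < μ A ∧ 0 < l B) ∧
    -- quantitatively: for any ε ∈ (0, α) and any witnessing pair P, Q made of
    -- nP and nQ rectangles, some rectangle A × B ⊆ R carries measure at least
    -- (α - ε)/N where N = 2^(nP+nQ) · 2^(nP+nQ) is the number of atom-pairs
    (∀ ε : ℝ, 0 < ε → ε < α → ∀ (nP nQ : ℕ) (P Q : Set (X × Y)),
      IsRectUnionN nP P → IsRectUnionN nQ Q → P ⊆ R → R ⊆ Q →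
      (∀ ω : Set (X × Y) → ℝ, IsFAP ω →
        (∀ (A : Set X) (B : Set Y), ω (A ×ˢ B) = μ A * l B) → ω Q - ω P ≤ ε) →
      ∃ (A : Set X) (B : Set Y), A ×ˢ B ⊆ R ∧
        μ A * l B ≥ (α - ε) / ((2 ^ (nP + nQ) : ℝ) * 2 ^ (nP + nQ))) := by
  obtain ⟨ω, hω, hωprod⟩ := hμ.exists_isFAP_prod hl
  have quantitative : ∀ ε : ℝ, 0 < ε → ε < α → ∀ (nP nQ : ℕ) (P Q : Set (X × Y)),
      IsRectUnionN nP P → IsRectUnionN nQ Q → P ⊆ R → R ⊆ Q →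
      (∀ ω : Set (X × Y) → ℝ, IsFAP ω →
        (∀ (A : Set X) (B : Set Y), ω (A ×ˢ B) = μ A * l B) → ω Q - ω P ≤ ε) →
      ∃ (A : Set X) (B : Set Y), A ×ˢ B ⊆ R ∧
        μ A * l B ≥ (α - ε) / ((2 ^ (nP + nQ) : ℝ) * 2 ^ (nP + nQ)) := by
    intro ε _ _ nP nQ P Q hP hQ hPR hRQ hPQ
    obtain ⟨A, B, hAB, hle⟩ := hP.exists_prod_subset_div_le hω hωprod
    have hωP : α - ε ≤ ω P := by
      linarith [houter nQ Q hQ hRQ ω hω hωprod, hPQ ω hω hωprod]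
    refine ⟨A, B, hAB.trans hPR, le_trans ?_ hle⟩
    exact div_le_div₀ (hω.nonneg P) hωP (by positivity) (by gcongr <;> norm_num)
  refine ⟨fun δ hδ hδα => ?_, quantitative⟩
  obtain ⟨nP, nQ, P, Q, hP, hQ, hPR, hRQ, hPQ⟩ := happrox (α - δ) (by linarith)
  obtain ⟨A, B, hAB, hle⟩ :=
    quantitative (α - δ) (by linarith) (by linarith) nP nQ P Q hP hQ hPR hRQ hPQ
  have hpos : 0 < μ A * l B := lt_of_lt_of_le (by rw [sub_sub_cancel]; positivity) hle
  exact ⟨A, B, hAB, pos_of_mul_pos_left hpos (hl.nonneg B),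
    pos_of_mul_pos_right hpos (hμ.nonneg A)⟩

theorem stmt_10 {X Y : Type*} (μ : Set X → ℝ) (l : Set Y → ℝ)
    (hμ : IsFAP μ) (hl : IsFAP l) (R : Set (X × Y)) (α : ℝ) (hα : 0 < α)
    (happrox : ∀ ε > (0 : ℝ), ∃ (nP nQ : ℕ) (P Q : Set (X × Y)),
      IsRectUnionN nP P ∧ IsRectUnionN nQ Q ∧ P ⊆ R ∧ R ⊆ Q ∧
      ∀ ω : Set (X × Y) → ℝ, IsFAP ω →
        (∀ (A : Set X) (B : Set Y), ω (A ×ˢ B) = μ A * l B) → ω Q - ω P ≤ ε)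
    -- the (μ×λ)-outer measure of R is at least α: every cover of R by a finite
    -- union of rectangles has product measure at least α
    (houter : ∀ (nQ : ℕ) (Q : Set (X × Y)), IsRectUnionN nQ Q → R ⊆ Q →
      ∀ ω : Set (X × Y) → ℝ, IsFAP ω →
        (∀ (A : Set X) (B : Set Y), ω (A ×ˢ B) = μ A * l B) → α ≤ ω Q) :
    (∀ δ : ℝ, 0 < δ → δ < α → ∃ (A : Set X) (B : Set Y),
        A ×ˢ B ⊆ R ∧ 0 < μ A ∧ 0 < l B) ∧
    -- quantitatively: for any ε ∈ (0, α) and any witnessing pair P, Q made of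
    -- nP and nQ rectangles, some rectangle A × B ⊆ R carries measure at least
    -- (α - ε)/N where N = 2^(nP+nQ) · 2^(nP+nQ) is the number of atom-pairs
    (∀ ε : ℝ, 0 < ε → ε < α → ∀ (nP nQ : ℕ) (P Q : Set (X × Y)),
      IsRectUnionN nP P → IsRectUnionN nQ Q → P ⊆ R → R ⊆ Q →
      (∀ ω : Set (X × Y) → ℝ, IsFAP ω →
        (∀ (A : Set X) (B : Set Y), ω (A ×ˢ B) = μ A * l B) → ω Q - ω P ≤ ε) →
      ∃ (A : Set X) (B : Set Y), A ×ˢ B ⊆ R ∧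
        μ A * l B ≥ (α - ε) / ((2 ^ (nP + nQ) : ℝ) * 2 ^ (nP + nQ))) :=
  stmt_10_general μ l hμ hl R α happrox houter
end

section
/- Let X, Y be sets and R ⊆ X × Y. Let μ be a finitely additive probability measure on Y, and suppose there are finitely many sets ψ₁,…,ψ_m ⊆ X partitioning X and sets θ¹₁,…,θ¹_m, θ²₁,…,θ²_m ⊆ Y such that for every i and every x ∈ ψ_i, θ¹_i ⊆ R_x ⊆ θ²_i (where R_x = {y : (x,y) ∈ R}), and μ(θ²_i) − μ(θ¹_i) ≤ ε with ε < 1/2 − β for some β ∈ (0, 1/2). Then for every finitely additive probability measure λ on X, there exist i and a set B ∈ {θ¹_i, Y \ θ²_i} with λ(ψ_i) ≥ 1/m, μ(B) ≥ β, and the pair (ψ_i, B) is R-homogeneous. -/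
lemma fap_biUnion {X ι : Type*} (lam : Set X → ℝ) (h : IsFAP lam)
    (s : Finset ι) (f : ι → Set X)
    (hdisj : ∀ i ∈ s, ∀ j ∈ s, i ≠ j → Disjoint (f i) (f j)) :
    lam (⋃ i ∈ s, f i) = ∑ i ∈ s, lam (f i) := by
  classical
  induction s using Finset.cons_induction with
  | empty =>
    simp only [Finset.sum_empty, Set.biUnion_empty]
    have h1 := h.2.2 ∅ ∅ (by simp)
    simpa using h1.symm
  | cons a s ha ih =>
    rw [Finset.sum_cons]
    have hd : Disjoint (f a) (⋃ i ∈ s, f i) := by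
      refine Set.disjoint_iff_forall_ne.mpr ?_
      intro x hx y hy
      simp only [Set.mem_iUnion] at hy
      obtain ⟨j, hj, hyj⟩ := hy
      have hne : a ≠ j := by rintro rfl; exact ha hj
      have := hdisj a (Finset.mem_cons_self a s) j (Finset.mem_cons_of_mem hj) hne
      exact fun hxy => Set.disjoint_left.mp this hx (hxy ▸ hyj)
    have : (⋃ i ∈ Finset.cons a s ha, f i) = f a ∪ ⋃ i ∈ s, f i := by
      simp [Finset.cons_eq_insert, Set.biUnion_insert]
    rw [this, h.2.2 _ _ hd,
      ih (fun i hi j hj hij => hdisj i (Finset.mem_cons_of_mem hi) j (Finset.mem_cons_of_mem hj) hij)]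

theorem stmt_16 {X Y : Type*} (R : Set (X × Y))
    (μ : Set Y → ℝ) (hμ : IsFAP μ)
    (m : ℕ) (hm : 0 < m) (ψ : Fin m → Set X)
    (hpart : ∀ x : X, ∃! i, x ∈ ψ i)
    (θ₁ θ₂ : Fin m → Set Y)
    (hsandwich : ∀ i, ∀ x ∈ ψ i,
      θ₁ i ⊆ {y | (x, y) ∈ R} ∧ {y | (x, y) ∈ R} ⊆ θ₂ i)
    (ε β : ℝ) (hβ0 : 0 < β) (hβ : β < 1 / 2) (hεβ : ε < 1 / 2 - β)
    (hgapμ : ∀ i, μ (θ₂ i) - μ (θ₁ i) ≤ ε) :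
    ∀ lam : Set X → ℝ, IsFAP lam →
      ∃ (i : Fin m) (B : Set Y), (B = θ₁ i ∨ B = Set.univ \ θ₂ i) ∧
        lam (ψ i) ≥ 1 / m ∧ μ B ≥ β ∧
        (ψ i ×ˢ B ⊆ R ∨ Disjoint (ψ i ×ˢ B) R) := by
  intro lam hlam
  -- pigeonhole: some i with lam (ψ i) ≥ 1/m
  have hdisj : ∀ i ∈ (Finset.univ : Finset (Fin m)), ∀ j ∈ Finset.univ, i ≠ j →
      Disjoint (ψ i) (ψ j) := by
    intro i _ j _ hij
    refine Set.disjoint_left.mpr fun x hxi hxj => hij ?_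
    obtain ⟨k, _, huniq⟩ := hpart x
    rw [huniq i hxi, huniq j hxj]
  have hcover : (⋃ i ∈ (Finset.univ : Finset (Fin m)), ψ i) = Set.univ := by
    ext x
    simp only [Set.mem_iUnion, Set.mem_univ, iff_true]
    obtain ⟨i, hi, -⟩ := hpart x
    exact ⟨i, Finset.mem_univ i, hi⟩
  have hsum : ∑ i : Fin m, lam (ψ i) = 1 := by
    rw [← fap_biUnion lam hlam _ _ hdisj, hcover, hlam.1]
  have hex : ∃ i : Fin m, 1 / (m : ℝ) ≤ lam (ψ i) := by
    by_contra hcon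
    push_neg at hcon
    have : ∑ i : Fin m, lam (ψ i) < ∑ _i : Fin m, 1 / (m : ℝ) := by
      apply Finset.sum_lt_sum_of_nonempty
      · exact Finset.univ_nonempty_iff.mpr ⟨⟨0, hm⟩⟩
      · intro i _; exact hcon i
    rw [hsum, Finset.sum_const, Finset.card_univ, Fintype.card_fin, nsmul_eq_mul] at this
    rw [mul_one_div, div_self (by positivity : (m : ℝ) ≠ 0)] at this
    exact lt_irrefl 1 this
  obtain ⟨i, hi⟩ := hex
  -- complement measure
  have hcomp : μ (Set.univ \ θ₂ i) = 1 - μ (θ₂ i) := by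
    have hd : Disjoint (θ₂ i) (Set.univ \ θ₂ i) := Set.disjoint_sdiff_right.mono_left le_rfl
    have hu : θ₂ i ∪ (Set.univ \ θ₂ i) = Set.univ := by
      ext y; simp [em]
    have := hμ.2.2 _ _ hd
    rw [hu, hμ.1] at this
    linarith
  have hsum2 : μ (θ₁ i) + μ (Set.univ \ θ₂ i) ≥ 1 - ε := by
    have := hgapμ i
    rw [hcomp]; linarith
  -- one of the two has measure ≥ β
  have hkey : μ (θ₁ i) ≥ β ∨ μ (Set.univ \ θ₂ i) ≥ β := by
    by_contra hcon
    push_neg at hcon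
    linarith [hcon.1, hcon.2]
  rcases hkey with hk | hk
  · refine ⟨i, θ₁ i, Or.inl rfl, hi, hk, Or.inl ?_⟩
    rintro ⟨x, y⟩ ⟨hx, hy⟩
    exact (hsandwich i x hx).1 hy
  · refine ⟨i, Set.univ \ θ₂ i, Or.inr rfl, hi, hk, Or.inr ?_⟩
    refine Set.disjoint_left.mpr ?_
    rintro ⟨x, y⟩ ⟨hx, hy⟩ hR
    exact hy.2 ((hsandwich i x hx).2 hR)
end
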